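/- arXiv:1705.09096 — 6 statements merged into one kernel-verified Lean document; each statement's English description precedes it below -/
import Mathlib

section
/- Let κ be a field and M a finite-dimensional κ-vector space equipped with a skew-symmetric nondegenerate bilinear form ω (i.e., ω(a,b) = -ω(b,a) for all a,b, and the form induces an isomorphism M → M*). If dim M ≥ 2, then M has a 2-dimensional subspace on which the restriction of ω is nondegenerate. -/
/-!
A pair `x, y` spans a plane on which `ω` is nondegenerate as soon as its Gram determinant
`ω x x * ω y y - ω x y * ω y x` is nonzero. If `ω` is alternating, any `x ≠ 0` together with
a `y` such that `ω x y ≠ 0` is such a pair. Otherwise, in characteristic 2, take `u` with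
`ω u u ≠ 0`: the form stays nondegenerate on the nonzero orthogonal complement `W` of `u`, and
either some `v ∈ W` has `ω v v ≠ 0`, giving the pair `u, v`, or `ω` is alternating on `W`.
-/

open LinearMap (BilinForm)
open Module

namespace LinearMap.BilinForm

variable {K V : Type*} [Field K] [AddCommGroup V] [Module K V]

theorem linearIndependent_of_gram_det_ne_zero {ι : Type*} [Fintype ι] [DecidableEq ι]
    (B : BilinForm K V) (v : ι → V) (h : (Matrix.of fun i j => B (v i) (v j)).det ≠ 0) :
    LinearIndependent K v := by
  rw [Fintype.linearIndependent_iff]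
  intro c hc
  refine congrFun (Matrix.eq_zero_of_vecMul_eq_zero h (funext fun j => ?_))
  have : B (∑ i, c i • v i) (v j) = 0 := by simp [hc]
  simpa [Matrix.vecMul, dotProduct, sum_left] using this

theorem nondegenerate_restrict_span_of_gram_det_ne_zero {ι : Type*} [Fintype ι] [DecidableEq ι]
    (B : BilinForm K V) (v : ι → V) (h : (Matrix.of fun i j => B (v i) (v j)).det ≠ 0) :
    (B.restrict (Submodule.span K (Set.range v))).Nondegenerate := by
  let b := Basis.span (B.linearIndependent_of_gram_det_ne_zero v h)
  refine (nondegenerate_iff_det_ne_zero b).mpr ?_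
  convert h using 2
  ext i j
  simp [b, BilinForm.toMatrix_apply, Basis.span_apply]

theorem exists_finrank_eq_two_nondegenerate_restrict (B : BilinForm K V) {x y : V}
    (hxy : B x x * B y y - B x y * B y x ≠ 0) :
    ∃ L : Submodule K V, finrank K L = 2 ∧ (B.restrict L).Nondegenerate := by
  have h : (Matrix.of fun i j => B (![x, y] i) (![x, y] j)).det ≠ 0 := by
    simpa [Matrix.det_fin_two] using hxy
  refine ⟨_, ?_, B.nondegenerate_restrict_span_of_gram_det_ne_zero _ h⟩
  rw [finrank_span_eq_card (B.linearIndependent_of_gram_det_ne_zero _ h), Fintype.card_fin]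

theorem gram_det_ne_zero_of_isotropic {B : BilinForm K V} (hskew : ∀ a b, B a b = -B b a)
    {x y : V} (hx : B x x = 0) (hy : B y y = 0) (hxy : B x y ≠ 0) :
    B x x * B y y - B x y * B y x ≠ 0 := by
  rw [hx, hy, hskew y x]
  simpa using hxy

theorem exists_gram_det_ne_zero_of_forall_isotropic [Nontrivial V] {B : BilinForm K V}
    (hskew : ∀ a b, B a b = -B b a) (hnd : B.Nondegenerate) (halt : ∀ x, B x x = 0) :
    ∃ x y : V, B x x * B y y - B x y * B y x ≠ 0 := by
  obtain ⟨x, hx⟩ := exists_ne (0 : V)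
  obtain ⟨y, hxy⟩ : ∃ y, B x y ≠ 0 := by
    by_contra! h
    exact hx (hnd.1 x h)
  exact ⟨x, y, gram_det_ne_zero_of_isotropic hskew (halt x) (halt y) hxy⟩

theorem exists_gram_det_ne_zero [FiniteDimensional K V] {B : BilinForm K V}
    (hskew : ∀ a b, B a b = -B b a) (hnd : B.Nondegenerate) (hdim : 2 ≤ finrank K V) :
    ∃ x y : V, B x x * B y y - B x y * B y x ≠ 0 := by
  have : Nontrivial V := nontrivial_of_finrank_pos (R := K) (by omega)
  by_cases halt : ∀ x, B x x = 0
  · exact exists_gram_det_ne_zero_of_forall_isotropic hskew hnd halt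
  push Not at halt
  obtain ⟨u, hu⟩ := halt
  have hrefl : B.IsRefl := fun a b h => by rw [hskew, h, neg_zero]
  set W := B.orthogonal (K ∙ u)
  have hWu (w : W) : B u w = 0 := w.2 u (Submodule.mem_span_singleton_self u)
  by_cases hW : ∃ w : W, B w w ≠ 0
  · obtain ⟨w, hw⟩ := hW
    refine ⟨u, w, ?_⟩
    rw [hWu w, hskew w u, hWu w]
    simpa using mul_ne_zero hu hw
  push Not at hW
  have : Nontrivial W := by
    refine nontrivial_of_finrank_pos (R := K) ?_
    have hsum : finrank K (K ∙ u) + finrank K W = finrank K V :=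
      Submodule.finrank_add_eq_of_isCompl (isCompl_span_singleton_orthogonal hu)
    have hline : finrank K (K ∙ u) = 1 :=
      finrank_span_singleton fun h => hu (by simp [h])
    omega
  obtain ⟨x, y, hxy⟩ := exists_gram_det_ne_zero_of_forall_isotropic (B := B.restrict W)
    (fun a b => hskew a b) (B.restrict_nondegenerate_orthogonal_spanSingleton hnd hrefl hu) hW
  exact ⟨x, y, hxy⟩

end LinearMap.BilinForm

/-- A finite-dimensional vector space with a skew-symmetric nondegenerate
bilinear form of dimension ≥ 2 has a 2-dimensional subspace on which the restriction
of the form is nondegenerate. -/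
theorem stmt_0 {κ M : Type*} [Field κ] [AddCommGroup M] [Module κ M]
    [FiniteDimensional κ M] (ω : BilinForm κ M)
    (hskew : ∀ a b : M, ω a b = - ω b a)
    (hnd : ω.Nondegenerate)
    (hdim : 2 ≤ finrank κ M) :
    ∃ L : Submodule κ M, finrank κ L = 2 ∧ (ω.restrict L).Nondegenerate := by
  obtain ⟨x, y, hxy⟩ := LinearMap.BilinForm.exists_gram_det_ne_zero hskew hnd hdim
  exact ω.exists_finrank_eq_two_nondegenerate_restrict hxy
end

section
/- Let R be a commutative local ring with maximal ideal 𝔪 and residue field κ = R/𝔪, and let M be a finitely generated free R-module of rank n = 2t > 0 with a skew-symmetric bilinear form ω: M × M → R that is nondegenerate (the Gram determinant of some basis is a unit). Let ρ: M → M ⊗ κ denote reduction mod 𝔪. If B₁ ∈ M and ρ(B₁) = b₁ is part of a symplectic basis (a₁, b₁, ..., a_t, b_t) of the κ-vector space M ⊗ κ for the induced form, then B₁ can be completed to a symplectic basis C = (A₁, B₁, ..., A_t, B_t) of M over R with ρ(C) = (a₁, b₁, ..., a_t, b_t). -/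
/-!
The pairs are lifted one at a time. Given a lift `v` of `d` whose pairs indexed by `s` are
hyperbolic and orthogonal to all other vectors of `v`, take a new pair: `ω (v aₖ) (v bₖ) ≡ 1`
mod `𝔪`, so rescaling `v aₖ` makes it `1`, and then every other vector is projected onto the
`ω`-orthogonal of the rescaled pair `(A, B)`. The projection exists because the Gram
determinant `1 + ω(A,A) ω(B,B)` of the pair is a unit: its residue is nonzero by
nondegeneracy of the reduced form. The projection moves a vector only by an element of `𝔪M`,
since its pairings with the new pair reduce to `0`, so the family still lifts `d`. Finally, a
family reducing to a basis of `M ⊗ κ` is a basis of `M`, its determinant against any basis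
having nonzero residue.
-/

open Module

/-- A basis of an `R`-module indexed by `Fin t ⊕ Fin t` is symplectic for a bilinear
form `ω` if, writing `Aᵢ = C (inl i)` and `Bᵢ = C (inr i)`, we have `ω(Aᵢ,Bᵢ) = 1`
and `ω(Aᵢ,Bⱼ) = ω(Aᵢ,Aⱼ) = ω(Bᵢ,Bⱼ) = 0` for `i ≠ j`. -/
def IsSymplecticBasisR {R M : Type*} [CommRing R] [AddCommGroup M] [Module R M]
    {t : ℕ} (ω : M →ₗ[R] M →ₗ[R] R) (C : Basis (Fin t ⊕ Fin t) R M) : Prop :=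
  (∀ i : Fin t, ω (C (Sum.inl i)) (C (Sum.inr i)) = 1) ∧
  (∀ i j : Fin t, i ≠ j →
    ω (C (Sum.inl i)) (C (Sum.inr j)) = 0 ∧
    ω (C (Sum.inl i)) (C (Sum.inl j)) = 0 ∧
    ω (C (Sum.inr i)) (C (Sum.inr j)) = 0)

open IsLocalRing Function Sum Finset

theorem Module.Basis.repr_mem_of_mem_ideal_smul_top {R M ι : Type*} [CommRing R]
    [AddCommGroup M] [Module R M] {I : Ideal R} (c : Basis ι R M) {x : M}
    (hx : x ∈ I • (⊤ : Submodule R M)) (i : ι) : c.repr x i ∈ I := by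
  refine Submodule.smul_induction_on hx (fun r hr m _ => ?_) fun x y hx hy => ?_
  · simpa using I.mul_mem_right _ hr
  · simpa using I.add_mem hx hy

section Symplectic

variable {R M ι : Type*} [CommRing R] [AddCommGroup M] [Module R M] (ω : M →ₗ[R] M →ₗ[R] R)

/-- Solving for the coefficients of `orthProj` inverts the Gram determinant
`1 + ω A A * ω B B` of a pair with `ω A B = 1`; the diagonal entries need not vanish
when `2` is not invertible. -/
noncomputable def orthCoeff (A B x : M) : R :=
  -Ring.inverse (1 + ω A A * ω B B) * (ω A x + ω B x * ω A A)

noncomputable def orthProj (A B x : M) : M :=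
  x + (ω B x + ω B B * orthCoeff ω A B x) • A + orthCoeff ω A B x • B

def IsSymplecticOn (v : ι ⊕ ι → M) (s : Finset ι) : Prop :=
  ∀ i ∈ s, ω (v (inl i)) (v (inr i)) = 1 ∧
    ∀ j, j ≠ inl i → j ≠ inr i → ω (v (inl i)) (v j) = 0 ∧ ω (v (inr i)) (v j) = 0

noncomputable def orthogonalize [DecidableEq ι] (v : ι ⊕ ι → M) (K : ι) (A B : M) :
    ι ⊕ ι → M :=
  fun j => if j = inl K then A else if j = inr K then B else orthProj ω A B (v j)

variable {ω} {A B : M}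

theorem apply_orthProj_left (hAB : ω A B = 1) (hu : IsUnit (1 + ω A A * ω B B)) (x : M) :
    ω A (orthProj ω A B x) = 0 := by
  have := Ring.inverse_mul_cancel _ hu
  simp only [orthProj, orthCoeff, map_add, map_smul, smul_eq_mul, hAB]
  linear_combination (-(ω A x + ω B x * ω A A)) * this

theorem apply_orthProj_right (hBA : ω B A = -1) (x : M) : ω B (orthProj ω A B x) = 0 := by
  simp only [orthProj, map_add, map_smul, smul_eq_mul, hBA]
  ring

theorem apply_orthProj_of_orthogonal {y : M} (hA : ω y A = 0) (hB : ω y B = 0) (x : M) :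
    ω y (orthProj ω A B x) = ω y x := by
  simp [orthProj, hA, hB]

theorem orthProj_eq_self {x : M} (hA : ω A x = 0) (hB : ω B x = 0) : orthProj ω A B x = x := by
  simp [orthProj, orthCoeff, hA, hB]

theorem orthProj_sub_mem {I : Ideal R} {x : M} (hA : ω A x ∈ I) (hB : ω B x ∈ I) :
    orthProj ω A B x - x ∈ I • (⊤ : Submodule R M) := by
  have hβ : orthCoeff ω A B x ∈ I := I.mul_mem_left _ (I.add_mem hA (I.mul_mem_right _ hB))
  rw [orthProj, add_assoc, add_sub_cancel_left]
  exact Submodule.add_mem _ (Submodule.smul_mem_smul (I.add_mem hB (I.mul_mem_left _ hβ)) trivial)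
    (Submodule.smul_mem_smul hβ trivial)

section Orthogonalize

variable [DecidableEq ι] {v : ι ⊕ ι → M} {K : ι}

@[simp]
theorem orthogonalize_inl_self : orthogonalize ω v K A B (inl K) = A := by
  simp [orthogonalize]

@[simp]
theorem orthogonalize_inr_self : orthogonalize ω v K A B (inr K) = B := by
  simp [orthogonalize]

theorem orthogonalize_of_ne {j : ι ⊕ ι} (h₁ : j ≠ inl K) (h₂ : j ≠ inr K) :
    orthogonalize ω v K A B j = orthProj ω A B (v j) := by
  simp [orthogonalize, h₁, h₂]

theorem orthogonalize_of_mem (hskew : ∀ x y, ω x y = -ω y x) {s : Finset ι} (hK : K ∉ s)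
    (hA : ∀ i ∈ s, ω (v (inl i)) A = 0 ∧ ω (v (inr i)) A = 0)
    (hB : ∀ i ∈ s, ω (v (inl i)) B = 0 ∧ ω (v (inr i)) B = 0) {i : ι} (hi : i ∈ s) :
    orthogonalize ω v K A B (inl i) = v (inl i) ∧ orthogonalize ω v K A B (inr i) = v (inr i) := by
  have hiK : i ≠ K := ne_of_mem_of_not_mem hi hK
  constructor <;> rw [orthogonalize_of_ne (by simp [hiK]) (by simp [hiK])] <;>
    refine orthProj_eq_self ?_ ?_ <;> simp [hskew _ (v _), hA i hi, hB i hi]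

theorem IsSymplecticOn.orthogonalize (hskew : ∀ x y, ω x y = -ω y x) {s : Finset ι}
    (hv : IsSymplecticOn ω v s) (hK : K ∉ s) (hAB : ω A B = 1)
    (hu : IsUnit (1 + ω A A * ω B B))
    (hA : ∀ i ∈ s, ω (v (inl i)) A = 0 ∧ ω (v (inr i)) A = 0)
    (hB : ∀ i ∈ s, ω (v (inl i)) B = 0 ∧ ω (v (inr i)) B = 0) :
    IsSymplecticOn ω (orthogonalize ω v K A B) (insert K s) := by
  have hBA : ω B A = -1 := by rw [hskew, hAB]
  intro i hi
  rcases Finset.mem_insert.mp hi with rfl | hi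
  · refine ⟨by simpa using hAB, fun j h₁ h₂ => ?_⟩
    rw [orthogonalize_inl_self, orthogonalize_inr_self, orthogonalize_of_ne h₁ h₂]
    exact ⟨apply_orthProj_left hAB hu _, apply_orthProj_right hBA _⟩
  · obtain ⟨hvi, hj⟩ := hv i hi
    obtain ⟨hl, hr⟩ := orthogonalize_of_mem hskew hK hA hB hi
    refine ⟨by rwa [hl, hr], fun j h₁ h₂ => ?_⟩
    rw [hl, hr]
    by_cases hjA : j = inl K
    · subst hjA; simpa using hA i hi
    by_cases hjB : j = inr K
    · subst hjB; simpa using hB i hi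
    rw [orthogonalize_of_ne hjA hjB,
      apply_orthProj_of_orthogonal (hA i hi).1 (hB i hi).1,
      apply_orthProj_of_orthogonal (hA i hi).2 (hB i hi).2]
    exact hj j h₁ h₂

end Orthogonalize

theorem IsSymplecticOn.one_add_mul_ne_zero {k V : Type*} [CommRing k] [Nontrivial k]
    [AddCommGroup V] [Module k V] {ω : V →ₗ[k] V →ₗ[k] k} (hskew : ∀ x y, ω x y = -ω y x)
    (hsep : ω.SeparatingLeft) (d : Basis (ι ⊕ ι) k V) {s : Finset ι}
    (hd : IsSymplecticOn ω d s) {K : ι} (hK : K ∈ s) :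
    1 + ω (d (inl K)) (d (inl K)) * ω (d (inr K)) (d (inr K)) ≠ 0 := by
  intro h
  obtain ⟨hab, hrest⟩ := hd K hK
  -- otherwise `(ω b b) • a - b` is `ω`-orthogonal to the whole basis `d`
  have hx : ω (d (inr K)) (d (inr K)) • d (inl K) - d (inr K) = 0 := by
    refine hsep _ fun y => ?_
    suffices ω (ω (d (inr K)) (d (inr K)) • d (inl K) - d (inr K)) = 0 from
      LinearMap.congr_fun this y
    refine d.ext fun j => ?_
    by_cases h₁ : j = inl K
    · subst h₁
      simp only [map_sub, map_smul, LinearMap.sub_apply, LinearMap.smul_apply, smul_eq_mul,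
        hskew (d (inr K)) (d (inl K)), hab, LinearMap.zero_apply]
      linear_combination h
    by_cases h₂ : j = inr K
    · subst h₂
      simp [hab]
    simp [(hrest j h₁ h₂).1, (hrest j h₁ h₂).2]
  simpa using congr_arg (fun z => d.repr z (inr K)) hx

end Symplectic

theorem IsSymplecticBasisR.isSymplecticOn {R M : Type*} [CommRing R] [AddCommGroup M]
    [Module R M] {t : ℕ} {ω : M →ₗ[R] M →ₗ[R] R} (hskew : ∀ x y, ω x y = -ω y x)
    {C : Basis (Fin t ⊕ Fin t) R M} (hC : IsSymplecticBasisR ω C) :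
    IsSymplecticOn ω C univ := by
  refine fun i _ => ⟨hC.1 i, ?_⟩
  rintro (j | j) h₁ h₂
  · have hij : i ≠ j := fun h => h₁ (h ▸ rfl)
    exact ⟨(hC.2 i j hij).2.1, by rw [hskew, (hC.2 j i hij.symm).1, neg_zero]⟩
  · have hij : i ≠ j := fun h => h₂ (h ▸ rfl)
    exact ⟨(hC.2 i j hij).1, (hC.2 i j hij).2.2⟩

theorem IsSymplecticOn.isSymplecticBasisR {R M : Type*} [CommRing R] [AddCommGroup M]
    [Module R M] {t : ℕ} {ω : M →ₗ[R] M →ₗ[R] R} {C : Basis (Fin t ⊕ Fin t) R M}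
    (hC : IsSymplecticOn ω C univ) : IsSymplecticBasisR ω C := by
  refine ⟨fun i => (hC i (mem_univ i)).1, fun i j hij => ?_⟩
  have hr := (hC i (mem_univ i)).2 (inr j) (by simp) (by simpa using hij.symm)
  have hl := (hC i (mem_univ i)).2 (inl j) (by simpa using hij.symm) (by simp)
  exact ⟨hr.1, hl.1, hr.2⟩

/-- `ρ` identifies `Mk` with `M ⧸ 𝔪M = M ⊗_R κ`. -/
structure IsResidueReduction (R : Type*) {M Mk : Type*} [CommRing R] [IsLocalRing R]
    [AddCommGroup M] [Module R M] [AddCommGroup Mk] [Module (ResidueField R) Mk]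
    (ρ : M →+ Mk) : Prop where
  surjective : Surjective ρ
  map_smul : ∀ (r : R) (m : M), ρ (r • m) = residue R r • ρ m
  eq_zero_iff : ∀ m : M, ρ m = 0 ↔ m ∈ (maximalIdeal R • ⊤ : Submodule R M)

namespace IsResidueReduction

variable {R M Mk ι : Type*} [CommRing R] [IsLocalRing R] [AddCommGroup M] [Module R M]
  [AddCommGroup Mk] [Module (ResidueField R) Mk] {ρ : M →+ Mk} {ω : M →ₗ[R] M →ₗ[R] R}
  {ωk : Mk →ₗ[ResidueField R] Mk →ₗ[ResidueField R] ResidueField R}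

theorem map_sum_smul (hρ : IsResidueReduction R ρ) (s : Finset ι) (r : ι → R) (m : ι → M) :
    ρ (∑ i ∈ s, r i • m i) = ∑ i ∈ s, residue R (r i) • ρ (m i) := by
  simp [map_sum, hρ.map_smul]

theorem map_eq_of_sub_mem (hρ : IsResidueReduction R ρ) {x y : M}
    (h : x - y ∈ (maximalIdeal R • ⊤ : Submodule R M)) : ρ x = ρ y := by
  rwa [← sub_eq_zero, ← map_sub, hρ.eq_zero_iff]

theorem skew (hρ : IsResidueReduction R ρ) (hω : ∀ x y, ωk (ρ x) (ρ y) = residue R (ω x y))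
    (hskew : ∀ x y, ω x y = -ω y x) (x y : Mk) : ωk x y = -ωk y x := by
  obtain ⟨a, rfl⟩ := hρ.surjective x
  obtain ⟨b, rfl⟩ := hρ.surjective y
  rw [hω, hω, hskew, map_neg]

variable [Fintype ι]

theorem linearIndependent_map_basis (hρ : IsResidueReduction R ρ) (c : Basis ι R M) :
    LinearIndependent (ResidueField R) fun i => ρ (c i) := by
  rw [Fintype.linearIndependent_iff]
  intro g hg i
  obtain ⟨r, rfl⟩ : ∃ r : ι → R, (fun i => residue R (r i)) = g :=
    ⟨fun i => surjInv residue_surjective (g i), funext fun i => surjInv_eq _ _⟩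
  have hmem : ∑ j, r j • c j ∈ (maximalIdeal R • ⊤ : Submodule R M) :=
    (hρ.eq_zero_iff _).mp (by rw [hρ.map_sum_smul]; exact hg)
  have hri := c.repr_mem_of_mem_ideal_smul_top hmem i
  rw [Basis.repr_sum_self] at hri
  exact (residue_eq_zero_iff _).mpr hri

theorem span_map_basis (hρ : IsResidueReduction R ρ) (c : Basis ι R M) :
    ⊤ ≤ Submodule.span (ResidueField R) (Set.range fun i => ρ (c i)) := by
  rintro _ -
  obtain ⟨x, rfl⟩ := hρ.surjective ‹Mk›
  rw [← c.sum_repr x, hρ.map_sum_smul]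
  exact Submodule.sum_mem _ fun i _ => Submodule.smul_mem _ _ (Submodule.subset_span ⟨i, rfl⟩)

noncomputable def basis (hρ : IsResidueReduction R ρ) (c : Basis ι R M) :
    Basis ι (ResidueField R) Mk :=
  Basis.mk (hρ.linearIndependent_map_basis c) (hρ.span_map_basis c)

@[simp]
theorem basis_apply (hρ : IsResidueReduction R ρ) (c : Basis ι R M) (i : ι) :
    hρ.basis c i = ρ (c i) :=
  Basis.mk_apply _ _ i

theorem residue_repr (hρ : IsResidueReduction R ρ) (c : Basis ι R M) (x : M) (i : ι) :
    residue R (c.repr x i) = (hρ.basis c).repr (ρ x) i := by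
  conv_rhs => rw [← c.sum_repr x, hρ.map_sum_smul]
  simp_rw [← hρ.basis_apply c]
  rw [Basis.repr_sum_self]

theorem separatingLeft [DecidableEq ι] (hρ : IsResidueReduction R ρ)
    (hω : ∀ x y, ωk (ρ x) (ρ y) = residue R (ω x y))
    (c : Basis ι R M) (hnd : IsUnit (Matrix.of fun i j => ω (c i) (c j)).det) :
    ωk.SeparatingLeft := by
  have hG : LinearMap.BilinForm.toMatrix (hρ.basis c) ωk =
      (residue R).mapMatrix (Matrix.of fun i j => ω (c i) (c j)) := by
    ext i j
    simp [LinearMap.BilinForm.toMatrix_apply, hω]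
  refine ((LinearMap.BilinForm.nondegenerate_iff_det_ne_zero (hρ.basis c)).mpr ?_).1
  rw [hG, ← RingHom.map_det]
  exact (hnd.map _).ne_zero

theorem exists_basis_eq {ι' : Type*} [Fintype ι'] [DecidableEq ι'] (hρ : IsResidueReduction R ρ)
    (c : Basis ι R M) (d : Basis ι' (ResidueField R) Mk) {v : ι' → M}
    (hv : ∀ i, ρ (v i) = d i) : ∃ C : Basis ι' R M, ⇑C = v := by
  set c' := c.reindex ((hρ.basis c).indexEquiv d)
  have hdet : IsUnit (c'.det v) := by
    rw [← residue_ne_zero_iff_isUnit, Basis.det_apply, RingHom.map_det]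
    have : (residue R).mapMatrix (c'.toMatrix v) = (hρ.basis c').toMatrix d := by
      ext i j
      simp [Basis.toMatrix_apply, hρ.residue_repr, hv]
    rw [this, ← Basis.det_apply]
    exact ((hρ.basis c').isUnit_det d).ne_zero
  obtain ⟨hli, hsp⟩ := c'.is_basis_iff_det.mpr hdet
  exact ⟨Basis.mk hli hsp.ge, Basis.coe_mk _ _⟩

section Lift

variable [DecidableEq ι]

theorem exists_lift_insert (hρ : IsResidueReduction R ρ) (hskew : ∀ x y, ω x y = -ω y x)
    (hω : ∀ x y, ωk (ρ x) (ρ y) = residue R (ω x y)) (hsep : ωk.SeparatingLeft)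
    {d : Basis (ι ⊕ ι) (ResidueField R) Mk} (hd : IsSymplecticOn ωk d univ)
    {v : ι ⊕ ι → M} (hv : ∀ j, ρ (v j) = d j) {s : Finset ι} (hvs : IsSymplecticOn ω v s)
    {K : ι} (hK : K ∉ s) :
    ∃ v' : ι ⊕ ι → M, (∀ j, ρ (v' j) = d j) ∧ IsSymplecticOn ω v' (insert K s) ∧
      v' (inr K) = v (inr K) ∧ ∀ i ∈ s, v' (inr i) = v (inr i) := by
  obtain ⟨hdK, hdK'⟩ := hd K (mem_univ K)
  have hres : residue R (ω (v (inl K)) (v (inr K))) = 1 := by rw [← hω, hv, hv, hdK]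
  obtain ⟨U, hU⟩ : IsUnit (ω (v (inl K)) (v (inr K))) := by
    rw [← residue_ne_zero_iff_isUnit, hres]
    exact one_ne_zero
  have hUinv : residue R (↑U⁻¹ : R) = 1 := by
    have h := congr_arg (residue R) U.inv_mul
    rwa [map_mul, hU, hres, mul_one, map_one] at h
  set A := (↑U⁻¹ : R) • v (inl K)
  set B := v (inr K)
  have hρA : ρ A = d (inl K) := by rw [hρ.map_smul, hUinv, one_smul, hv]
  have hAB : ω A B = 1 := by simp [A, B, ← hU]
  have hu : IsUnit (1 + ω A A * ω B B) := by
    rw [← residue_ne_zero_iff_isUnit]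
    simpa [← hω, hρA, B, hv] using
      hd.one_add_mul_ne_zero (hρ.skew hω hskew) hsep d (mem_univ K)
  have hA : ∀ i ∈ s, ω (v (inl i)) A = 0 ∧ ω (v (inr i)) A = 0 := by
    intro i hi
    have hiK : i ≠ K := ne_of_mem_of_not_mem hi hK
    obtain ⟨-, h⟩ := hvs i hi
    exact ⟨by simp [A, (h (inl K) (by simpa using hiK.symm) (by simp)).1],
      by simp [A, (h (inl K) (by simpa using hiK.symm) (by simp)).2]⟩
  have hB : ∀ i ∈ s, ω (v (inl i)) B = 0 ∧ ω (v (inr i)) B = 0 := by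
    intro i hi
    have hiK : i ≠ K := ne_of_mem_of_not_mem hi hK
    obtain ⟨-, h⟩ := hvs i hi
    exact h (inr K) (by simp) (by simpa using hiK.symm)
  refine ⟨orthogonalize ω v K A B, fun j => ?_, hvs.orthogonalize hskew hK hAB hu hA hB,
    orthogonalize_inr_self, fun i hi => (orthogonalize_of_mem hskew hK hA hB hi).2⟩
  by_cases h₁ : j = inl K
  · subst h₁; simpa using hρA
  by_cases h₂ : j = inr K
  · subst h₂; simpa using hv _
  rw [orthogonalize_of_ne h₁ h₂, ← hv j]
  refine hρ.map_eq_of_sub_mem (orthProj_sub_mem ?_ ?_) <;> rw [← residue_eq_zero_iff, ← hω]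
  · rw [hρA, hv]; exact (hdK' j h₁ h₂).1
  · rw [hv, hv]; exact (hdK' j h₁ h₂).2

theorem exists_isSymplecticOn_lift (hρ : IsResidueReduction R ρ)
    (hskew : ∀ x y, ω x y = -ω y x) (hω : ∀ x y, ωk (ρ x) (ρ y) = residue R (ω x y))
    (hsep : ωk.SeparatingLeft) {d : Basis (ι ⊕ ι) (ResidueField R) Mk}
    (hd : IsSymplecticOn ωk d univ) {i₀ : ι} {B₀ : M} (hB₀ : ρ B₀ = d (inr i₀)) :
    ∃ v : ι ⊕ ι → M, (∀ j, ρ (v j) = d j) ∧ v (inr i₀) = B₀ ∧ IsSymplecticOn ω v univ := by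
  -- the pair `i₀` is treated first, so that `B₀` is never moved afterwards
  suffices ∀ s : Finset ι, ∃ v : ι ⊕ ι → M, (∀ j, ρ (v j) = d j) ∧ v (inr i₀) = B₀ ∧
      IsSymplecticOn ω v (insert i₀ s) by
    simpa using this univ
  intro s
  induction s using Finset.induction_on with
  | empty =>
    let v₀ := update (fun j => surjInv hρ.surjective (d j)) (inr i₀) B₀
    have hv₀ : ∀ j, ρ (v₀ j) = d j := by
      intro j
      by_cases h : j = inr i₀
      · subst h; simpa [v₀] using hB₀
      · simp [v₀, h, surjInv_eq]
    obtain ⟨v, hv, hvs, hvB, -⟩ := hρ.exists_lift_insert hskew hω hsep hd hv₀ (s := ∅)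
      (by simp [IsSymplecticOn]) (notMem_empty i₀)
    exact ⟨v, hv, by simpa [v₀] using hvB, hvs⟩
  | insert K s hK ih =>
    obtain ⟨v, hv, hvB, hvs⟩ := ih
    by_cases hK₀ : K = i₀
    · subst hK₀
      exact ⟨v, hv, hvB, by rwa [insert_idem]⟩
    obtain ⟨v', hv', hvs', -, hfix⟩ :=
      hρ.exists_lift_insert hskew hω hsep hd hv hvs (K := K) (by simp [hK, hK₀])
    exact ⟨v', hv', by rw [hfix i₀ (mem_insert_self _ _), hvB], by rwa [insert_comm]⟩

end Lift

end IsResidueReduction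

/-- lifting a symplectic basis of the reduction mod the maximal ideal.
Here `R` is a commutative local ring with residue field `κ`, `M` is a free `R`-module
of rank `2t > 0` carrying a skew-symmetric bilinear form `ω` whose Gram determinant on
some basis is a unit (nondegeneracy).  The reduction `M ⊗ κ` is modelled by a
`κ`-vector space `Mk` together with a surjective additive map `ρ : M → Mk` whose kernel
is `𝔪M`, compatible with scalars, and carrying the induced form `ωk`
(`ωk (ρ x) (ρ y) = residue (ω x y)`).  If `B₁ ∈ M` reduces to the element `b₁` of a
symplectic basis `(a₁, b₁, …, a_t, b_t)` of `Mk`, then `B₁` completes to a symplectic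
basis `C = (A₁, B₁, …, A_t, B_t)` of `M` over `R` reducing to the given basis. -/
theorem stmt_5 {R M : Type*} [CommRing R] [IsLocalRing R]
    [AddCommGroup M] [Module R M] {t : ℕ} (ht : 0 < t)
    (ω : M →ₗ[R] M →ₗ[R] R)
    (hskew : ∀ a b : M, ω a b = - ω b a)
    (c : Basis (Fin (2 * t)) R M)
    (hnd : IsUnit (Matrix.det (Matrix.of fun i j => ω (c i) (c j))))
    -- the reduction mod the maximal ideal
    {Mk : Type*} [AddCommGroup Mk] [Module (IsLocalRing.ResidueField R) Mk]
    (ρ : M →+ Mk)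
    (hρsur : Function.Surjective ρ)
    (hρsmul : ∀ (r : R) (m : M), ρ (r • m) = (IsLocalRing.residue R r) • ρ m)
    (hρker : ∀ m : M, ρ m = 0 ↔ m ∈ (IsLocalRing.maximalIdeal R • ⊤ : Submodule R M))
    -- the induced symplectic form on the reduction
    (ωk : Mk →ₗ[IsLocalRing.ResidueField R] Mk →ₗ[IsLocalRing.ResidueField R]
      (IsLocalRing.ResidueField R))
    (hcomp : ∀ x y : M, ωk (ρ x) (ρ y) = IsLocalRing.residue R (ω x y))
    -- a symplectic basis of the reduction whose element `b₁` lifts to `B₁ ∈ M`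
    (d : Basis (Fin t ⊕ Fin t) (IsLocalRing.ResidueField R) Mk)
    (hd : IsSymplecticBasisR ωk d)
    (B₁ : M) (hB₁ : ρ B₁ = d (Sum.inr ⟨0, ht⟩)) :
    ∃ C : Basis (Fin t ⊕ Fin t) R M, IsSymplecticBasisR ω C ∧
      C (Sum.inr ⟨0, ht⟩) = B₁ ∧ ∀ i, ρ (C i) = d i := by
  have hρ : IsResidueReduction R ρ := ⟨hρsur, hρsmul, hρker⟩
  have hsep : ωk.SeparatingLeft := hρ.separatingLeft hcomp c hnd
  obtain ⟨v, hvρ, hvB, hv⟩ := hρ.exists_isSymplecticOn_lift hskew hcomp hsep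
    (hd.isSymplecticOn (hρ.skew hcomp hskew)) hB₁
  obtain ⟨C, rfl⟩ := hρ.exists_basis_eq c d hvρ
  exact ⟨C, hv.isSymplecticBasisR, hvB, hvρ⟩
end

section
/- Every invertible skew-symmetric 2t × 2t matrix over a commutative local ring R is congruent (i.e., of the form PᵀAP for an invertible matrix P) to a block-diagonal matrix with t blocks of the form [[*, 1], [-1, *]] on the main diagonal and zeros in all other entries. -/
open Matrix

/-
Over the residue field a nonsingular skew-symmetric matrix of size at least two has a nonzero
principal 2 × 2 minor, so some principal 2 × 2 minor of `A` is a unit. A permutation moves it to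
the bottom-right corner and a 2 × 2 congruence brings it to the shape `[[a, 1], [-1, b]]`;
clearing the off-diagonal blocks with its Schur complement splits `A`, up to congruence, as the
orthogonal sum of this block and an invertible skew-symmetric matrix of size `2t - 2`, to which
induction applies.
-/

namespace Matrix

section CommRing

variable {R : Type*} [CommRing R] {n : Type*} [Fintype n] [DecidableEq n]

def Congruent (A B : Matrix n n R) : Prop :=
  ∃ P : Matrix n n R, IsUnit P.det ∧ Pᵀ * A * P = B

namespace Congruent

theorem refl (A : Matrix n n R) : Congruent A A :=
  ⟨1, by simp, by simp⟩

theorem trans {A B C : Matrix n n R} (hAB : Congruent A B) (hBC : Congruent B C) :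
    Congruent A C := by
  obtain ⟨P, hP, rfl⟩ := hAB
  obtain ⟨Q, hQ, rfl⟩ := hBC
  exact ⟨P * Q, by simpa using hP.mul hQ, by simp [transpose_mul, Matrix.mul_assoc]⟩

theorem symm {A B : Matrix n n R} (h : Congruent A B) : Congruent B A := by
  obtain ⟨P, hP, rfl⟩ := h
  have hPt : IsUnit Pᵀ.det := by rwa [det_transpose]
  refine ⟨P⁻¹, isUnit_nonsing_inv_det P hP, ?_⟩
  rw [transpose_nonsing_inv, Matrix.mul_assoc, Matrix.mul_assoc, mul_nonsing_inv _ hP,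
    Matrix.mul_one, nonsing_inv_mul_cancel_left _ _ hPt]

theorem transpose_eq_neg {A B : Matrix n n R} (h : Congruent A B) (hA : Aᵀ = -A) :
    Bᵀ = -B := by
  obtain ⟨P, -, rfl⟩ := h
  simp [transpose_mul, hA, Matrix.mul_assoc]

theorem isUnit_det {A B : Matrix n n R} (h : Congruent A B) (hA : IsUnit A.det) :
    IsUnit B.det := by
  obtain ⟨P, hP, rfl⟩ := h
  simpa using (hP.mul hA).mul hP

theorem submatrix {m : Type*} [Fintype m] [DecidableEq m] {A B : Matrix n n R}
    (h : Congruent A B) (e : m ≃ n) : Congruent (A.submatrix e e) (B.submatrix e e) := by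
  obtain ⟨P, hP, rfl⟩ := h
  exact ⟨P.submatrix e e, by simpa using hP, by
    rw [transpose_submatrix, submatrix_mul_equiv, submatrix_mul_equiv]⟩

theorem fromBlocks_diagonal {m : Type*} [Fintype m] [DecidableEq m] {A A' : Matrix m m R}
    {B B' : Matrix n n R} (hA : Congruent A A') (hB : Congruent B B') :
    Congruent (fromBlocks A 0 0 B) (fromBlocks A' 0 0 B') := by
  obtain ⟨P, hP, rfl⟩ := hA
  obtain ⟨Q, hQ, rfl⟩ := hB
  exact ⟨fromBlocks P 0 0 Q, by simpa [det_fromBlocks_zero₂₁] using hP.mul hQ, by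
    simp [fromBlocks_transpose, fromBlocks_multiply]⟩

end Congruent

theorem congruent_submatrix_iff {m : Type*} [Fintype m] [DecidableEq m] {A B : Matrix n n R}
    (e : m ≃ n) : Congruent (A.submatrix e e) (B.submatrix e e) ↔ Congruent A B :=
  ⟨fun h => by simpa using h.submatrix e.symm, fun h => h.submatrix e⟩

theorem congruent_submatrix_perm (A : Matrix n n R) (σ : Equiv.Perm n) :
    Congruent A (A.submatrix σ σ) := by
  refine ⟨(1 : Matrix n n R).submatrix id σ, ?_, ?_⟩
  · rw [det_permute', det_one, mul_one]
    exact (Equiv.Perm.sign σ).isUnit.map (Int.castRingHom R)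
  · ext i j; simp [mul_apply, one_apply]

theorem congruent_fromBlocks_schur {m : Type*} [Fintype m] [DecidableEq m]
    (N : Matrix m m R) (C : Matrix m n R) (M : Matrix n n R) [Invertible M] (hM : Mᵀ = -M) :
    Congruent (fromBlocks N C (-Cᵀ) M) (fromBlocks (N + C * ⅟M * Cᵀ) 0 0 M) := by
  have hM' : (⅟M)ᵀ = -⅟M := by
    have : ⅟M = -(⅟M)ᵀ := invOf_eq_right_inv <| by
      rw [Matrix.mul_neg, ← Matrix.neg_mul, ← hM, ← transpose_mul, invOf_mul_self,
        transpose_one]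
    simpa using congrArg transpose this
  refine Congruent.symm ⟨fromBlocks 1 0 (⅟M * -Cᵀ) 1, by simp, ?_⟩
  rw [fromBlocks_eq_of_invertible₂₂ N C (-Cᵀ) M]
  simp only [Matrix.mul_neg, sub_neg_eq_add, fromBlocks_transpose, transpose_one, transpose_zero,
    transpose_neg, transpose_mul, transpose_transpose, hM', neg_neg]

def skewNormalForm {t : ℕ} (c : Fin (2 * t) → R) : Matrix (Fin (2 * t)) (Fin (2 * t)) R :=
  of fun i j =>
    if i = j then c i
    else if (i : ℕ) + 1 = (j : ℕ) ∧ (i : ℕ) % 2 = 0 then 1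
    else if (j : ℕ) + 1 = (i : ℕ) ∧ (j : ℕ) % 2 = 0 then -1
    else 0

theorem skewNormalForm_submatrix_finSumFinEquiv {t : ℕ} (c : Fin (2 * (t + 1)) → R) :
    (skewNormalForm c).submatrix finSumFinEquiv finSumFinEquiv =
      fromBlocks (skewNormalForm fun i => c (Fin.castAdd 2 i)) 0 0
        !![c (Fin.natAdd (2 * t) 0), 1; -1, c (Fin.natAdd (2 * t) 1)] := by
  ext (x | x) (y | y)
  · simp [skewNormalForm, Fin.ext_iff]
  · have hx : (x : ℕ) < 2 * t := x.isLt
    have hy : (y : ℕ) < 2 := y.isLt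
    simp only [skewNormalForm, submatrix_apply, of_apply, finSumFinEquiv_apply_left,
      finSumFinEquiv_apply_right, fromBlocks_apply₁₂, Matrix.zero_apply, Fin.ext_iff,
      Fin.val_castAdd, Fin.val_natAdd, Nat.mul_eq]
    split_ifs <;> first | rfl | omega
  · have hx : (x : ℕ) < 2 := x.isLt
    have hy : (y : ℕ) < 2 * t := y.isLt
    simp only [skewNormalForm, submatrix_apply, of_apply, finSumFinEquiv_apply_left,
      finSumFinEquiv_apply_right, fromBlocks_apply₂₁, Matrix.zero_apply, Fin.ext_iff,
      Fin.val_castAdd, Fin.val_natAdd, Nat.mul_eq]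
    split_ifs <;> first | rfl | omega
  · fin_cases x <;> fin_cases y <;> simp [skewNormalForm, Fin.ext_iff]

end CommRing

theorem det_eq_zero_of_transpose_eq_neg {K n : Type*} [Field K] [Fintype n] [DecidableEq n]
    [Nontrivial n] (M : Matrix n n K) (hM : Mᵀ = -M)
    (hminor : ∀ i j, i ≠ j → M i i * M j j - M i j * M j i = 0) : M.det = 0 := by
  have hskew : ∀ i j, M j i = -M i j := fun i j => congrFun (congrFun hM i) j
  by_cases h2 : (2 : K) = 0
  · have : CharP K 2 := CharTwo.of_one_ne_zero_of_two_eq_zero one_ne_zero h2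
    -- Squaring is a ring map in characteristic 2, and it turns `M` into a rank-one matrix.
    have hsq : M.map (frobenius K 2) = vecMulVec (fun i => M i i) (fun i => M i i) := by
      ext i j
      rcases eq_or_ne i j with rfl | hij
      · simp [frobenius_def, sq, vecMulVec_apply]
      · have := hminor i j hij
        rw [hskew i j, CharTwo.neg_eq] at this
        simp only [map_apply, frobenius_def, vecMulVec_apply, sq]
        linear_combination -this
    have : M.det ^ 2 = 0 := by
      rw [show M.det ^ 2 = frobenius K 2 M.det from rfl, RingHom.map_det,
        RingHom.mapMatrix_apply, hsq, det_vecMulVec]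
    exact pow_eq_zero_iff two_ne_zero |>.mp this
  · have hdiag : ∀ i, M i i = 0 := fun i => by
      have := hskew i i
      exact (mul_eq_zero.mp (show (2 : K) * M i i = 0 by linear_combination this)).resolve_left h2
    have : M = 0 := by
      ext i j
      rcases eq_or_ne i j with rfl | hij
      · exact hdiag i
      · have := hminor i j hij
        rw [hdiag, hdiag, hskew i j] at this
        simpa using this
    rw [this, det_zero]

section IsLocalRing

variable {R : Type*} [CommRing R] [IsLocalRing R]

theorem exists_isUnit_principal_minor {n : Type*} [Fintype n] [DecidableEq n] [Nontrivial n]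
    (A : Matrix n n R) (hA : Aᵀ = -A) (hdet : IsUnit A.det) :
    ∃ i j, i ≠ j ∧ IsUnit (A i i * A j j - A i j * A j i) := by
  by_contra! h
  have hres : (A.map (IsLocalRing.residue R)).det = 0 := by
    refine det_eq_zero_of_transpose_eq_neg _ (by rw [← transpose_map, hA]; ext; simp) ?_
    intro i j hij
    simpa using (IsLocalRing.residue_eq_zero_iff _).mpr (h i j hij)
  exact (hdet.map (IsLocalRing.residue R)).ne_zero (by rwa [RingHom.map_det])

theorem exists_congruent_fin_two (M : Matrix (Fin 2) (Fin 2) R) (hM : Mᵀ = -M)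
    (hdet : IsUnit M.det) : ∃ a b : R, Congruent M !![a, 1; -1, b] := by
  have hskew : ∀ i j, M j i = -M i j := fun i j => congrFun (congrFun hM i) j
  obtain ⟨r, u, hu⟩ : ∃ r : R, IsUnit (M 0 1 + r * M 0 0) := by
    by_cases h01 : IsUnit (M 0 1)
    · exact ⟨0, by simpa using h01⟩
    refine ⟨1, ?_⟩
    by_contra h
    rw [det_fin_two, hskew 0 1, sub_eq_add_neg] at hdet
    rcases IsLocalRing.isUnit_or_isUnit_of_isUnit_add hdet with h00 | h01'
    · exact IsLocalRing.nonunits_add h (b := -M 0 1) (mem_nonunits_iff.mpr (by simpa using h01))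
        (by simpa using isUnit_of_mul_isUnit_left h00)
    · exact h01 (by simpa using h01')
  -- The second column `v` of `Q` satisfies `(M *ᵥ v) 0 = 1` and has a unit last coordinate.
  set Q : Matrix (Fin 2) (Fin 2) R := !![1, r * ↑u⁻¹; 0, ↑u⁻¹]
  have hQ : Congruent M (Qᵀ * M * Q) := ⟨Q, by simp [Q], rfl⟩
  have h01 : (Qᵀ * M * Q) 0 1 = 1 := by
    simp [Q, mul_apply, Fin.sum_univ_two]
    linear_combination (-(↑u⁻¹ : R)) * hu + u.inv_mul
  have h10 : (Qᵀ * M * Q) 1 0 = -1 := by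
    rw [← h01]
    exact congrFun (congrFun (hQ.transpose_eq_neg hM) 0) 1
  refine ⟨(Qᵀ * M * Q) 0 0, (Qᵀ * M * Q) 1 1, ?_⟩
  convert hQ using 1
  ext i j
  fin_cases i <;> fin_cases j <;> simp [h01, h10]

theorem exists_congruent_fromBlocks_fin_two {m : Type*} [Fintype m] [DecidableEq m]
    (A : Matrix (m ⊕ Fin 2) (m ⊕ Fin 2) R) (hA : Aᵀ = -A) (hdet : IsUnit A.det)
    (h₂₂ : IsUnit A.toBlocks₂₂.det) :
    ∃ (N : Matrix m m R) (a b : R), Nᵀ = -N ∧ IsUnit N.det ∧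
      Congruent A (fromBlocks N 0 0 !![a, 1; -1, b]) := by
  obtain ⟨P, C, D, M, rfl⟩ : ∃ P C D M, A = fromBlocks P C D M :=
    ⟨_, _, _, _, (fromBlocks_toBlocks A).symm⟩
  have hblocks := hA
  rw [fromBlocks_transpose, fromBlocks_neg, fromBlocks_inj] at hblocks
  obtain ⟨-, -, hCD, hM⟩ := hblocks
  obtain rfl : D = -Cᵀ := by rw [hCD, neg_neg]
  rw [toBlocks_fromBlocks₂₂] at h₂₂
  let := M.invertibleOfIsUnitDet h₂₂
  obtain ⟨a, b, hab⟩ := exists_congruent_fin_two M hM h₂₂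
  set N := P + C * ⅟M * Cᵀ
  have hAN : Congruent (fromBlocks P C (-Cᵀ) M) (fromBlocks N 0 0 M) :=
    congruent_fromBlocks_schur P C M hM
  have hN := hAN.transpose_eq_neg hA
  rw [fromBlocks_transpose, fromBlocks_neg, fromBlocks_inj] at hN
  have hNdet := hAN.isUnit_det hdet
  rw [det_fromBlocks_zero₂₁] at hNdet
  exact ⟨N, a, b, hN.1, isUnit_of_mul_isUnit_left hNdet,
    hAN.trans ((Congruent.refl N).fromBlocks_diagonal hab)⟩

theorem exists_congruent_skewNormalForm :
    ∀ {t : ℕ} (A : Matrix (Fin (2 * t)) (Fin (2 * t)) R), Aᵀ = -A → IsUnit A.det →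
      ∃ c, Congruent A (skewNormalForm c)
  | 0, A, _, _ => ⟨0, (Matrix.ext fun i => i.elim0 : A = skewNormalForm 0) ▸ Congruent.refl A⟩
  | t + 1, A, hA, hdet => by
    have : Nontrivial (Fin (2 * (t + 1))) := Fin.nontrivial_iff_two_le.mpr (by omega)
    obtain ⟨i, j, hij, hminor⟩ := exists_isUnit_principal_minor A hA hdet
    obtain ⟨σ, hσi, hσj⟩ : ∃ σ : Equiv.Perm (Fin (2 * (t + 1))),
        σ (Fin.natAdd (2 * t) 0) = i ∧ σ (Fin.natAdd (2 * t) 1) = j :=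
      MulAction.is_two_pretransitive_iff.mp (Equiv.Perm.isMultiplyPretransitive _ 2)
        (by simp [Fin.ext_iff]) hij
    set B := A.submatrix (finSumFinEquiv.trans σ) (finSumFinEquiv.trans σ)
    have hB : Bᵀ = -B := by rw [transpose_submatrix, hA]; rfl
    have hBdet : IsUnit B.det := by rwa [det_submatrix_equiv_self]
    have hB₂₂ : IsUnit B.toBlocks₂₂.det := by
      rw [det_fin_two]
      simpa [B, toBlocks₂₂, hσi, hσj] using hminor
    obtain ⟨N, a, b, hN, hNdet, hBN⟩ := exists_congruent_fromBlocks_fin_two B hB hBdet hB₂₂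
    obtain ⟨c', hc'⟩ := exists_congruent_skewNormalForm N hN hNdet
    refine ⟨fun k => Sum.elim c' ![a, b] (finSumFinEquiv.symm k),
      (congruent_submatrix_perm A σ).trans ?_⟩
    rw [← congruent_submatrix_iff finSumFinEquiv, skewNormalForm_submatrix_finSumFinEquiv]
    simpa [B] using hBN.trans (hc'.fromBlocks_diagonal (Congruent.refl _))

end IsLocalRing

end Matrix

/-- Every invertible skew-symmetric `2t × 2t` matrix over a commutative
local ring is congruent (`PᵀAP` for an invertible `P`) to a block-diagonal matrix with
`t` blocks `[[*, 1], [-1, *]]` on the diagonal and zeros elsewhere. The block at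
position `k` occupies the rows/columns `2k, 2k+1`. -/
theorem stmt_6 {R : Type*} [CommRing R] [IsLocalRing R] {t : ℕ}
    (A : Matrix (Fin (2 * t)) (Fin (2 * t)) R)
    (hskew : Aᵀ = -A) (hinv : IsUnit A.det) :
    ∃ P : Matrix (Fin (2 * t)) (Fin (2 * t)) R, IsUnit P.det ∧
      ∃ c : Fin (2 * t) → R,
        Pᵀ * A * P = Matrix.of (fun i j =>
          if i = j then c i
          else if (i : ℕ) + 1 = (j : ℕ) ∧ (i : ℕ) % 2 = 0 then 1
          else if (j : ℕ) + 1 = (i : ℕ) ∧ (j : ℕ) % 2 = 0 then -1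
          else 0) := by
  obtain ⟨c, P, hP, hPA⟩ := Matrix.exists_congruent_skewNormalForm A hskew hinv
  exact ⟨P, hP, c, hPA⟩
end

section
/- Let G be a profinite group, K a topologically finitely generated closed subgroup, and μ: G → K a continuous homomorphism such that μ(K)Φ(K) = K. Then μ(K) = K, and setting N = ker μ one has KN = G and K ∩ N = {1}; in particular K is a retract of G. -/
/-- The Frattini subgroup of a topological group: the intersection of all maximal
open (proper) subgroups. -/
def frattiniTop (K : Type*) [Group K] [TopologicalSpace K] : Subgroup K :=
  ⨅ (H : Subgroup K) (_ : IsOpen (H : Set K) ∧ H ≠ ⊤ ∧ ∀ H' : Subgroup K, H < H' → H' = ⊤), H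

/-- A closed subgroup is topologically finitely generated if some finite subset
generates a dense subgroup. -/
def TopFG {G : Type*} [Group G] [TopologicalSpace G] [IsTopologicalGroup G]
    (K : Subgroup G) : Prop :=
  ∃ S : Set K, S.Finite ∧ (Subgroup.closure S).topologicalClosure = ⊤


open Subgroup Pointwise


section Aux

variable {X : Type*} [Group X] [TopologicalSpace X] [IsTopologicalGroup X]
  [CompactSpace X] [TotallyDisconnectedSpace X]

lemma aux_exists_ons {W : Set X} (hW : IsOpen W) (h1 : (1 : X) ∈ W) :
    ∃ H : OpenNormalSubgroup X, (H : Set X) ⊆ W := by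
  obtain ⟨V, hV, h1V, hVW⟩ := compact_exists_isClopen_in_isOpen hW h1
  obtain ⟨H, hH⟩ := IsTopologicalGroup.exist_openNormalSubgroup_sub_clopen_nhds_of_one hV h1V
  exact ⟨H, hH.trans hVW⟩

lemma aux_mem_all_open {x : X} (hx : ∀ H : Subgroup X, IsOpen (H : Set X) → x ∈ H) :
    x = 1 := by
  by_contra hne
  obtain ⟨H, hH⟩ := aux_exists_ons (isOpen_compl_singleton (x := x))
    (by simpa using (Ne.symm hne))
  exact hH (hx H.toSubgroup H.toOpenSubgroup.isOpen) rfl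

lemma aux_proper_open {H : Subgroup X} (hH : IsClosed (H : Set X)) (hne : H ≠ ⊤) :
    ∃ M : Subgroup X, IsOpen (M : Set X) ∧ M ≠ ⊤ ∧ H ≤ M := by
  obtain ⟨g, hg⟩ : ∃ g : X, g ∉ H := by
    by_contra h; push_neg at h; exact hne ((Subgroup.eq_top_iff' H).mpr h)
  have hop : IsOpen ((fun u => g * u) ⁻¹' (↑H)ᶜ) :=
    hH.isOpen_compl.preimage (continuous_mul_left g)
  have h1 : (1 : X) ∈ (fun u => g * u) ⁻¹' (↑H)ᶜ := by simpa using hg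
  obtain ⟨U, hU⟩ := aux_exists_ons hop h1
  refine ⟨H ⊔ U.toSubgroup, ?_, ?_, le_sup_left⟩
  · exact Subgroup.isOpen_mono le_sup_right U.toOpenSubgroup.isOpen
  · intro htop
    have hmem : g ∈ H ⊔ U.toSubgroup := htop ▸ Subgroup.mem_top g
    have hmem' : g ∈ (H : Set X) * (U.toSubgroup : Set X) := by
      rw [← Subgroup.mul_normal H U.toSubgroup]
      exact_mod_cast hmem
    obtain ⟨h, hh, u, hu, hgh⟩ := hmem'
    have h2 : u⁻¹ ∈ (fun u => g * u) ⁻¹' (↑H)ᶜ := hU (Subgroup.inv_mem _ hu)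
    simp only [Set.mem_preimage, Set.mem_compl_iff, SetLike.mem_coe] at h2
    exact h2 (by rw [← hgh, mul_inv_cancel_right]; exact hh)

omit [TotallyDisconnectedSpace X] in
lemma aux_exists_maximal : ∀ (n : ℕ) (M : Subgroup X), M.index = n → IsOpen (M : Set X) →
    M ≠ ⊤ → ∃ N : Subgroup X, (IsOpen (N : Set X) ∧ N ≠ ⊤ ∧ ∀ H' : Subgroup X, N < H' → H' = ⊤)
      ∧ M ≤ N := by
  intro n
  induction n using Nat.strong_induction_on with
  | _ n ih =>
    intro M hMn hMo hMne
    by_cases hmax : ∀ H' : Subgroup X, M < H' → H' = ⊤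
    · exact ⟨M, ⟨hMo, hMne, hmax⟩, le_rfl⟩
    · push_neg at hmax
      obtain ⟨M', hlt, hne'⟩ := hmax
      haveI : Finite (X ⧸ M) := M.quotient_finite_of_isOpen hMo
      haveI hMfin : M.FiniteIndex := Subgroup.finiteIndex_of_finite_quotient (H := M)
      have hM'o : IsOpen ((M' : Subgroup X) : Set X) := Subgroup.isOpen_mono hlt.le hMo
      have hidx : M'.index < n := hMn ▸ Subgroup.index_strictAnti hlt
      obtain ⟨N, hN, hMN⟩ := ih _ hidx M' rfl hM'o hne'
      exact ⟨N, hN, hlt.le.trans hMN⟩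

/-- Frattini non-generation. -/
lemma aux_frattini {H : Subgroup X} (hH : IsClosed (H : Set X))
    (hsup : H ⊔ frattiniTop X = ⊤) : H = ⊤ := by
  by_contra hne
  obtain ⟨M, hMo, hMne, hHM⟩ := aux_proper_open hH hne
  obtain ⟨N, ⟨hNo, hNne, hNmax⟩, hMN⟩ := aux_exists_maximal M.index M rfl hMo hMne
  have hPhi : frattiniTop X ≤ N := by
    exact iInf_le_of_le N (iInf_le_of_le ⟨hNo, hNne, hNmax⟩ le_rfl)
  have : (⊤ : Subgroup X) ≤ N := hsup ▸ sup_le (hHM.trans hMN) hPhi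
  exact hNne (top_le_iff.mp this)

end Aux

lemma aux_homs_finite {X F : Type*} [Group X] [TopologicalSpace X]
    [Group F] [Finite F] [TopologicalSpace F] [DiscreteTopology F]
    {S : Set X} (hS : S.Finite) (hdense : Dense ((Subgroup.closure S : Subgroup X) : Set X)) :
    {f : X →* F | Continuous f}.Finite := by
  haveI := hS.to_subtype
  have hinj : Function.Injective
      (fun f : {f : X →* F | Continuous f} => (fun s : S => (f : X →* F) s)) := by
    rintro ⟨f, hf⟩ ⟨g, hg⟩ h
    have hSfg : ∀ s ∈ S, f s = g s := fun s hs => congrFun h ⟨s, hs⟩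
    have hcl : ∀ x ∈ Subgroup.closure S, f x = g x := fun x hx =>
      Subgroup.closure_induction (fun y hy => hSfg y hy) (by simp)
        (fun y z _ _ hy hz => by simp [map_mul, hy, hz])
        (fun y _ hy => by simp [hy]) hx
    have heq : Set.EqOn f g (_root_.closure ((Subgroup.closure S : Subgroup X) : Set X)) :=
      Set.EqOn.closure (fun x hx => hcl x hx) hf hg
    exact Subtype.ext (MonoidHom.ext fun x => heq (hdense x))
  have : Finite {f : X →* F | Continuous f} := Finite.of_injective _ hinj
  exact Set.toFinite _

/-- `Equiv.permCongr` as a monoid hom. -/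
def permHomOfEquiv {α β : Type*} (e : α ≃ β) : Equiv.Perm α →* Equiv.Perm β where
  toFun := e.permCongr
  map_one' := by ext x; simp
  map_mul' := fun σ τ => by ext x; simp [Equiv.permCongr_apply, Equiv.Perm.mul_apply]

section Aux2

variable {X : Type*} [Group X] [TopologicalSpace X] [IsTopologicalGroup X]
  [CompactSpace X] [TotallyDisconnectedSpace X]

omit [CompactSpace X] [TotallyDisconnectedSpace X] in
lemma aux_smul_open (H : Subgroup X) (hH : IsOpen (H : Set X)) (j y : X ⧸ H) :
    IsOpen {k : X | k • j = y} := by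
  induction j using QuotientGroup.induction_on with
  | H g =>
  induction y using QuotientGroup.induction_on with
  | H g' =>
  have : {k : X | k • ((g : X ⧸ H)) = (g' : X ⧸ H)} = (fun k => (k * g)⁻¹ * g') ⁻¹' (H : Set X) := by
    ext k
    simp only [Set.mem_setOf_eq, Set.mem_preimage, SetLike.mem_coe,
      MulAction.Quotient.smul_coe, QuotientGroup.eq, smul_eq_mul]
  rw [this]
  exact hH.preimage (by continuity)

omit [CompactSpace X] [TotallyDisconnectedSpace X] in
lemma aux_psi_iff (H : Subgroup X) {n : ℕ} (e : X ⧸ H ≃ Fin n) (k : X) :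
    k ∈ H ↔ ((permHomOfEquiv e).comp (MulAction.toPermHom X (X ⧸ H))) k (e ((1:X) : X ⧸ H))
      = e ((1:X) : X ⧸ H) := by
  have happ : ((permHomOfEquiv e).comp (MulAction.toPermHom X (X ⧸ H))) k (e ((1:X) : X ⧸ H))
      = e (k • ((1:X) : X ⧸ H)) := by
    simp [permHomOfEquiv, Equiv.permCongr_apply]
  have hk1 : k • ((1:X) : X ⧸ H) = ((k : X) : X ⧸ H) := by
    rw [MulAction.Quotient.smul_coe]; simp
  rw [happ, e.apply_eq_iff_eq, hk1, QuotientGroup.eq]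
  simp

omit [TotallyDisconnectedSpace X] in
lemma aux_psi_cont (H : Subgroup X) (hH : IsOpen (H : Set X)) {n : ℕ} (e : X ⧸ H ≃ Fin n)
    [TopologicalSpace (Equiv.Perm (Fin n))] [DiscreteTopology (Equiv.Perm (Fin n))] :
    Continuous ((permHomOfEquiv e).comp (MulAction.toPermHom X (X ⧸ H))) := by
  rw [continuous_def]
  intro s _
  have key : ∀ (σ : Equiv.Perm (Fin n)) (k : X),
      ((permHomOfEquiv e).comp (MulAction.toPermHom X (X ⧸ H))) k = σ ↔
        ∀ i : Fin n, k • e.symm i = e.symm (σ i) := by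
    intro σ k
    rw [Equiv.ext_iff]
    refine forall_congr' fun i => ?_
    have : ((permHomOfEquiv e).comp (MulAction.toPermHom X (X ⧸ H))) k i
        = e (k • e.symm i) := by simp [permHomOfEquiv, Equiv.permCongr_apply]
    rw [this, Equiv.apply_eq_iff_eq_symm_apply]
  have : (((permHomOfEquiv e).comp (MulAction.toPermHom X (X ⧸ H)) : X →* Equiv.Perm (Fin n)))
        ⁻¹' s = ⋃ σ ∈ s, ⋂ i : Fin n, {k : X | k • e.symm i = e.symm (σ i)} := by
    ext k
    simp only [Set.mem_preimage, Set.mem_iUnion, Set.mem_iInter, Set.mem_setOf_eq]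
    constructor
    · intro hk
      exact ⟨_, hk, (key _ k).mp rfl⟩
    · rintro ⟨σ, hσ, hk⟩
      rwa [← (key σ k).mpr hk] at hσ
  rw [this]
  exact isOpen_biUnion fun σ _ => isOpen_iInter_of_finite fun i => aux_smul_open H hH _ _

lemma aux_open_index_finite
    (hfg : ∃ S : Set X, S.Finite ∧ Dense ((Subgroup.closure S : Subgroup X) : Set X)) (n : ℕ) :
    {H : Subgroup X | IsOpen (H : Set X) ∧ H.index = n}.Finite := by
  obtain ⟨S, hSfin, hSdense⟩ := hfg
  letI : TopologicalSpace (Equiv.Perm (Fin n)) := ⊥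
  haveI : DiscreteTopology (Equiv.Perm (Fin n)) := ⟨rfl⟩
  have hhoms := aux_homs_finite (F := Equiv.Perm (Fin n)) hSfin hSdense
  haveI := hhoms.to_subtype
  set T := {H : Subgroup X | IsOpen (H : Set X) ∧ H.index = n} with hT
  have hcard : ∀ H : T, Nat.card (X ⧸ (H : Subgroup X)) = n := by
    intro H
    rw [← Subgroup.index_eq_card]
    exact H.2.2
  have hpos : ∀ H : T, Nat.card (X ⧸ (H : Subgroup X)) ≠ 0 := by
    intro H
    haveI : Finite (X ⧸ (H : Subgroup X)) := Subgroup.quotient_finite_of_isOpen _ H.2.1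
    exact Nat.card_ne_zero.mpr ⟨⟨(1 : X)⟩, inferInstance⟩
  let eH : ∀ H : T, X ⧸ (H : Subgroup X) ≃ Fin n := fun H =>
    (Nat.equivFinOfCardPos (hpos H)).trans (finCongr (hcard H))
  let Θ : T → {f : X →* Equiv.Perm (Fin n) | Continuous f} × Fin n := fun H =>
    (⟨(permHomOfEquiv (eH H)).comp (MulAction.toPermHom X (X ⧸ (H : Subgroup X))),
      aux_psi_cont _ H.2.1 _⟩, eH H ((1:X) : X ⧸ (H : Subgroup X)))
  have hΘinj : Function.Injective Θ := by
    intro H₁ H₂ h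
    obtain ⟨h1, h2⟩ := Prod.ext_iff.mp h
    have h1' := Subtype.ext_iff.mp h1
    apply Subtype.ext
    ext k
    rw [aux_psi_iff (H₁ : Subgroup X) (eH H₁) k, aux_psi_iff (H₂ : Subgroup X) (eH H₂) k]
    simp only [Θ] at h1' h2
    rw [h1', h2]
  have : Finite T := Finite.of_injective Θ hΘinj
  exact Set.toFinite _

lemma aux_hopfian
    (hfg : ∃ S : Set X, S.Finite ∧ Dense ((Subgroup.closure S : Subgroup X) : Set X))
    (φ : X →* X) (hc : Continuous φ) (hs : Function.Surjective φ) :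
    Function.Injective φ := by
  rw [← MonoidHom.ker_eq_bot_iff, eq_bot_iff]
  intro x hx
  rw [Subgroup.mem_bot]
  apply aux_mem_all_open
  intro U hU
  set T := {H : Subgroup X | IsOpen (H : Set X) ∧ H.index = U.index} with hT
  have hTfin : T.Finite := aux_open_index_finite hfg U.index
  have hmaps : Set.MapsTo (Subgroup.comap φ) T T := fun H hH =>
    ⟨hH.1.preimage hc, by
      rw [Subgroup.index_comap_of_surjective (H := H) (f := φ) hs]; exact hH.2⟩
  have hinjOn : Set.InjOn (Subgroup.comap φ) T := by
    intro H₁ _ H₂ _ h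
    have := congrArg (Subgroup.map φ) h
    rwa [Subgroup.map_comap_eq_self_of_surjective hs,
      Subgroup.map_comap_eq_self_of_surjective hs] at this
  have hsurj : Set.SurjOn (Subgroup.comap φ) T T :=
    ((hTfin.injOn_iff_bijOn_of_mapsTo hmaps).mp hinjOn).surjOn
  obtain ⟨V, hVT, hVU⟩ := hsurj (⟨hU, rfl⟩ : U ∈ T)
  rw [← hVU]
  have hx1 : φ x = 1 := by simpa [MonoidHom.mem_ker] using hx
  exact Subgroup.mem_comap.mpr (by rw [hx1]; exact V.one_mem)

end Aux2

/-- Let `G` be a profinite group, `K` a topologically finitely generated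
closed subgroup, and `μ : G → K` a continuous homomorphism with `μ(K)Φ(K) = K`.
Then `μ(K) = K`, and for `N = ker μ` one has `KN = G` and `K ∩ N = 1`; in particular
`K` is a continuous retract of `G`. -/
theorem stmt_8 {G : Type*} [Group G] [TopologicalSpace G] [IsTopologicalGroup G]
    [CompactSpace G] [TotallyDisconnectedSpace G]
    (K : Subgroup G) (hKclosed : IsClosed (K : Set G)) (hKfg : TopFG K)
    (mu : G →* K) (hmu : Continuous mu)
    (hfr : (Subgroup.map mu K) ⊔ frattiniTop ↥K = ⊤) :
    Subgroup.map mu K = ⊤ ∧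
    K ⊔ mu.ker = ⊤ ∧ K ⊓ mu.ker = ⊥ ∧
    ∃ τ : G →* K, Continuous τ ∧ ∀ k : K, τ (k : G) = k := by
  haveI : CompactSpace ↥K := isCompact_iff_compactSpace.mp hKclosed.isCompact
  set φ : ↥K →* ↥K := mu.comp K.subtype with hφ
  have hφc : Continuous φ := hmu.comp continuous_subtype_val
  have hrange : φ.range = Subgroup.map mu K := by
    rw [hφ, MonoidHom.range_comp, Subgroup.range_subtype]
  have hclosed : IsClosed ((Subgroup.map mu K : Subgroup ↥K) : Set ↥K) := by
    have h : ((Subgroup.map mu K : Subgroup ↥K) : Set ↥K) = Set.range φ := by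
      rw [← hrange]; rfl
    rw [h]
    exact (isCompact_range hφc).isClosed
  obtain ⟨S, hSfin, hStop⟩ := hKfg
  have hSdense : Dense ((Subgroup.closure S : Subgroup ↥K) : Set ↥K) := by
    rw [dense_iff_closure_eq, ← Subgroup.topologicalClosure_coe, hStop, Subgroup.coe_top]
  have h1 : Subgroup.map mu K = ⊤ := aux_frattini hclosed hfr
  have hφs : Function.Surjective φ := by
    rw [← MonoidHom.range_eq_top, hrange]
    exact h1
  have hφi : Function.Injective φ := aux_hopfian ⟨S, hSfin, hSdense⟩ φ hφc hφs
  refine ⟨h1, ?_, ?_, ?_⟩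
  · rw [eq_top_iff']
    intro g
    obtain ⟨k, hk⟩ := hφs (mu g)
    have hker : (↑k)⁻¹ * g ∈ mu.ker := by
      rw [MonoidHom.mem_ker, map_mul, map_inv]
      have hmk : mu ↑k = φ k := rfl
      rw [hmk, hk]
      exact inv_mul_cancel (mu g)
    have hmem := Subgroup.mul_mem_sup k.2 hker
    simpa [mul_inv_cancel_left] using hmem
  · rw [eq_bot_iff]
    intro x hx
    obtain ⟨hxK, hxker⟩ := Subgroup.mem_inf.mp hx
    rw [Subgroup.mem_bot]
    have h0 : φ ⟨x, hxK⟩ = 1 := by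
      have : mu x = 1 := MonoidHom.mem_ker.mp hxker
      exact this
    have h2 : (⟨x, hxK⟩ : ↥K) = 1 := hφi (by rw [h0, map_one])
    exact congrArg Subtype.val h2
  · have hbij : Function.Bijective φ := ⟨hφi, hφs⟩
    let e : ↥K ≃* ↥K := MulEquiv.ofBijective φ hbij
    have hecont : Continuous e := hφc
    have hsymm : Continuous e.symm := by
      let h : ↥K ≃ₜ ↥K := Continuous.homeoOfEquivCompactToT2 (f := e.toEquiv) hecont
      exact h.symm.continuous
    refine ⟨e.symm.toMonoidHom.comp mu, hsymm.comp hmu, fun k => ?_⟩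
    show e.symm (mu ↑k) = k
    have hmk : mu ↑k = φ k := rfl
    rw [hmk]
    exact e.symm_apply_apply k
end

section
/- Let G be a pro-p Demushkin group with d(G) > 2, where every closed subgroup of infinite index is a free pro-p group and every open subgroup U satisfies d(U) = (d(G)-2)[G:U] + 2. Then the intersection of any two nontrivial closed normal subgroups of G is nontrivial. -/
open scoped Pointwise

/-- A profinite group is pro-`p` if every open normal subgroup has `p`-power index. -/
def IsProPGroup (p : ℕ) (G : Type*) [Group G] [TopologicalSpace G] : Prop :=
  ∀ N : Subgroup G, N.Normal → IsOpen (N : Set G) → ∃ k : ℕ, N.index = p ^ k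

/-- A pro-`p` group `F` is a free pro-`p` group if it has a generating subset `X`
converging to `1` such that every map from `X` to a pro-`p` group `H` converging to `1`
extends uniquely to a continuous homomorphism `F → H`. -/
def IsFreeProP (p : ℕ) (F : Type*) [Group F] [TopologicalSpace F]
    [IsTopologicalGroup F] : Prop :=
  ∃ X : Set F, (Subgroup.closure X).topologicalClosure = ⊤ ∧
    ∀ (H : Type) (_ : Group H) (_ : TopologicalSpace H) (_ : IsTopologicalGroup H)
      (_ : CompactSpace H) (_ : TotallyDisconnectedSpace H), IsProPGroup p H →
      ∀ f : X → H, (∀ U ∈ nhds (1 : H), {x : X | f x ∉ U}.Finite) →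
        ∃! φ : F →* H, Continuous φ ∧ ∀ x : X, φ (x : F) = f x

/-- Two subgroups `A, B` of a pro-`p` group `G` exhibit `G` as their free pro-`p`
product `G = A ⨿ B` if they topologically generate `G` and every pair of continuous
homomorphisms from `A` and `B` to a pro-`p` group extends uniquely to a continuous
homomorphism on `G`. -/
def IsFreeProPProduct (p : ℕ) (G : Type*) [Group G] [TopologicalSpace G]
    [IsTopologicalGroup G] (A B : Subgroup G) : Prop :=
  (A ⊔ B).topologicalClosure = ⊤ ∧
  ∀ (H : Type) (_ : Group H) (_ : TopologicalSpace H) (_ : IsTopologicalGroup H)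
    (_ : CompactSpace H) (_ : TotallyDisconnectedSpace H), IsProPGroup p H →
    ∀ (f : A →* H) (g : B →* H), Continuous f → Continuous g →
      ∃! φ : G →* H, Continuous φ ∧ (∀ a : A, φ (a : G) = f a) ∧ (∀ b : B, φ (b : G) = g b)

/-- The minimal number of topological generators of a topological group,
valued in `ℕ∞` (with value `⊤` if the group is not topologically finitely generated). -/
noncomputable def genNum (G : Type*) [Group G] [TopologicalSpace G]
    [IsTopologicalGroup G] : ℕ∞ :=
  ⨅ S : {S : Finset G // (Subgroup.closure (S : Set G)).topologicalClosure = ⊤},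
    ((S.1.card : ℕ∞))

/-!
If `A ⊓ B = ⊥`, then `A` and `B` commute elementwise, so nontrivial `a ∈ A` and `b ∈ B`
topologically generate an abelian closed subgroup `U` with `d(U) ≤ 2`. Since `d(G) > 2`, the index
formula rules out `[G : U] < ∞`, so `U` is free pro-`p`. Two distinct basis elements could be sent
to non-commuting elements of the Heisenberg group over `𝔽_p`, so `U` is procyclic on one basis
element `x`, and no `x ^ p ^ k` is trivial. In a pro-`p` group, an element of `closure ⟨y⟩`
outside `closure ⟨y ^ p⟩` topologically generates `closure ⟨y⟩` (as it does in every finite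
quotient), hence every closed subgroup meeting `closure ⟨x⟩` nontrivially contains some
`x ^ p ^ n`. Applied to `A` and `B`, this puts a nontrivial power of `x` into `A ⊓ B`.
-/

open Subgroup

section PGroup

variable {p : ℕ} [hp : Fact p.Prime] {Q : Type*} [Group Q]

theorem IsPGroup.mem_zpowers_of_notMem_zpowers_pow (hQ : IsPGroup p Q) {y c : Q}
    (hc : c ∈ zpowers y) (hcp : c ∉ zpowers (y ^ p)) : y ∈ zpowers c := by
  obtain ⟨k, rfl⟩ := mem_zpowers_iff.1 hc
  obtain ⟨m, hm⟩ := IsPGroup.iff_orderOf.1 hQ y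
  have hpk : ¬ p ∣ k.natAbs := by
    rintro hdvd
    obtain ⟨j, rfl⟩ := Int.natCast_dvd.2 hdvd
    exact hcp ⟨j, by simp only [← zpow_natCast, ← zpow_mul]⟩
  rw [mem_zpowers_zpow_iff, hm]
  exact Nat.Coprime.pow_right m ((hp.out.coprime_iff_not_dvd.2 hpk).symm)

theorem IsPGroup.isProPGroup [Finite Q] [TopologicalSpace Q] (hQ : IsPGroup p Q) :
    IsProPGroup p Q :=
  fun N _ _ => hQ.index N

end PGroup

theorem Subgroup.mem_zpowers_sup_iff {G : Type*} [Group G] {N : Subgroup G} [N.Normal]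
    {x y : G} : x ∈ zpowers y ⊔ N ↔ (x : G ⧸ N) ∈ zpowers (y : G ⧸ N) := by
  have h := comap_map_eq (QuotientGroup.mk' N) (zpowers y)
  rw [QuotientGroup.ker_mk', MonoidHom.map_zpowers] at h
  rw [← h]
  rfl

theorem IsProPGroup.isPGroup_quotient {p : ℕ} {G : Type*} [Group G] [TopologicalSpace G]
    (hG : IsProPGroup p G) {N : Subgroup G} [hN : N.Normal] (hNo : IsOpen (N : Set G)) :
    IsPGroup p (G ⧸ N) :=
  let ⟨_, hk⟩ := hG N hN hNo
  IsPGroup.of_card hk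

section ProP

variable {p : ℕ} {G : Type*} [Group G] [TopologicalSpace G] [IsTopologicalGroup G]
  [CompactSpace G] [TotallyDisconnectedSpace G]

theorem Subgroup.mem_topologicalClosure_iff_forall_mem_sup {H : Subgroup G} {x : G} :
    x ∈ H.topologicalClosure ↔ ∀ N : Subgroup G, N.Normal → IsOpen (N : Set G) → x ∈ H ⊔ N := by
  refine ⟨fun hx N _ hN => H.topologicalClosure_minimal le_sup_left
    (isClosed_of_isOpen _ (isOpen_mono le_sup_right hN)) hx, fun hx => ?_⟩
  refine mem_closure_iff_nhds_one.2 fun U hU => ?_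
  obtain ⟨N, hNU⟩ := ProfiniteGrp.exist_openNormalSubgroup_sub_open_nhds_of_one isOpen_interior
    (mem_interior_iff_mem_nhds.2 hU)
  obtain ⟨y, hy, z, hz, rfl⟩ := mem_sup_of_normal_right.1 (hx N inferInstance N.isOpen)
  have hyz : y / (y * z) ∈ N.toSubgroup := by
    simpa [div_eq_mul_inv, mul_assoc] using N.isNormal'.conj_mem _ (N.inv_mem hz) y
  exact ⟨y, hy, interior_subset (hNU hyz)⟩

theorem IsProPGroup.exists_notMem_closure_zpowers_pow (hG : IsProPGroup p G) {c : G}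
    (hc : c ≠ 1) (x : G) : ∃ k, c ∉ (zpowers (x ^ p ^ k)).topologicalClosure := by
  obtain ⟨N, hN⟩ := ProfiniteGrp.exist_openNormalSubgroup_sub_open_nhds_of_one
    isOpen_compl_singleton hc.symm
  obtain ⟨k, hk⟩ := hG.isPGroup_quotient N.isOpen (x : G ⧸ (N : Subgroup G))
  have hxk : x ^ p ^ k ∈ N := (QuotientGroup.eq_one_iff _).1 (by rwa [QuotientGroup.mk_pow])
  exact ⟨k, fun hck => hN (topologicalClosure_minimal _ (zpowers_le.2 hxk)
    (isClosed_of_isOpen _ N.isOpen) hck) rfl⟩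

variable [Fact p.Prime]

theorem IsProPGroup.mem_closure_zpowers_of_notMem_closure_zpowers_pow (hG : IsProPGroup p G)
    {y c : G} (hc : c ∈ (zpowers y).topologicalClosure)
    (hcp : c ∉ (zpowers (y ^ p)).topologicalClosure) : y ∈ (zpowers c).topologicalClosure := by
  obtain ⟨N₀, hN₀n, hN₀o, hcN₀⟩ : ∃ N₀ : Subgroup G, N₀.Normal ∧ IsOpen (N₀ : Set G) ∧
      c ∉ zpowers (y ^ p) ⊔ N₀ := by
    simpa [mem_topologicalClosure_iff_forall_mem_sup] using hcp
  rw [mem_topologicalClosure_iff_forall_mem_sup] at hc ⊢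
  intro N hNn hNo
  have hM : c ∉ zpowers (y ^ p) ⊔ (N ⊓ N₀) := fun h =>
    hcN₀ (sup_le_sup_left (inf_le_right : N ⊓ N₀ ≤ N₀) _ h)
  refine sup_le_sup_left (inf_le_left : N ⊓ N₀ ≤ N) _ ?_
  have hMo : IsOpen ((N ⊓ N₀ : Subgroup G) : Set G) := hNo.inter hN₀o
  have hcM := hc _ inferInstance hMo
  rw [mem_zpowers_sup_iff] at hcM hM ⊢
  rw [QuotientGroup.mk_pow] at hM
  exact (hG.isPGroup_quotient hMo).mem_zpowers_of_notMem_zpowers_pow hcM hM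

theorem IsProPGroup.exists_pow_mem_of_mem_closure_zpowers (hG : IsProPGroup p G)
    {C : Subgroup G} (hC : IsClosed (C : Set G)) {x c : G} (hcC : c ∈ C) (hc : c ≠ 1)
    (hcx : c ∈ (zpowers x).topologicalClosure) : ∃ n, x ^ p ^ n ∈ C := by
  have hcl : (zpowers c).topologicalClosure ≤ C :=
    topologicalClosure_minimal _ (zpowers_le.2 hcC) hC
  obtain ⟨k, hk⟩ := hG.exists_notMem_closure_zpowers_pow hc x
  induction k with
  | zero =>
    simp only [pow_zero, pow_one] at hk
    exact absurd hcx hk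
  | succ k ih =>
    by_cases hck : c ∈ (zpowers (x ^ p ^ k)).topologicalClosure
    · refine ⟨k, hcl (hG.mem_closure_zpowers_of_notMem_closure_zpowers_pow hck ?_)⟩
      rwa [← pow_mul, ← pow_succ]
    · exact ih hck

end ProP

/-- The upper unitriangular matrices `[[1, a, c], [0, 1, b], [0, 0, 1]]` over `R`. -/
@[ext]
structure Heisenberg (R : Type*) where
  a : R
  b : R
  c : R

namespace Heisenberg

variable {R : Type*}

def equivProd : Heisenberg R ≃ R × R × R where
  toFun x := (x.a, x.b, x.c)
  invFun t := ⟨t.1, t.2.1, t.2.2⟩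

instance [Finite R] : Finite (Heisenberg R) := Finite.of_equiv _ equivProd.symm

theorem card : Nat.card (Heisenberg R) = Nat.card R ^ 3 := by
  rw [Nat.card_congr equivProd, Nat.card_prod, Nat.card_prod]
  ring

instance : TopologicalSpace (Heisenberg R) := ⊥
instance : DiscreteTopology (Heisenberg R) := ⟨rfl⟩

variable [CommRing R]

instance : Mul (Heisenberg R) := ⟨fun x y => ⟨x.a + y.a, x.b + y.b, x.c + y.c + x.a * y.b⟩⟩
instance : One (Heisenberg R) := ⟨⟨0, 0, 0⟩⟩
instance : Inv (Heisenberg R) := ⟨fun x => ⟨-x.a, -x.b, -x.c + x.a * x.b⟩⟩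

@[simp] theorem mul_a (x y : Heisenberg R) : (x * y).a = x.a + y.a := rfl
@[simp] theorem mul_b (x y : Heisenberg R) : (x * y).b = x.b + y.b := rfl
@[simp] theorem mul_c (x y : Heisenberg R) : (x * y).c = x.c + y.c + x.a * y.b := rfl
@[simp] theorem one_a : (1 : Heisenberg R).a = 0 := rfl
@[simp] theorem one_b : (1 : Heisenberg R).b = 0 := rfl
@[simp] theorem one_c : (1 : Heisenberg R).c = 0 := rfl
@[simp] theorem inv_a (x : Heisenberg R) : x⁻¹.a = -x.a := rfl
@[simp] theorem inv_b (x : Heisenberg R) : x⁻¹.b = -x.b := rfl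
@[simp] theorem inv_c (x : Heisenberg R) : x⁻¹.c = -x.c + x.a * x.b := rfl

instance : Group (Heisenberg R) where
  mul_assoc x y z := by ext <;> simp only [mul_a, mul_b, mul_c] <;> ring
  one_mul x := by ext <;> simp
  mul_one x := by ext <;> simp
  inv_mul_cancel x := by
    ext <;> simp only [mul_a, mul_b, mul_c, inv_a, inv_b, inv_c, one_a, one_b, one_c] <;> ring

theorem not_commute [Nontrivial R] :
    ¬ Commute (⟨1, 0, 0⟩ : Heisenberg R) ⟨0, 1, 0⟩ := fun h => by
  simpa using congrArg Heisenberg.c h.eq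

end Heisenberg

/-- The lifting property of a basis `X` in `IsFreeProP`, which unfolds to
`∃ X, (closure X).topologicalClosure = ⊤ ∧ IsFreeProPBasis p X`. -/
def IsFreeProPBasis (p : ℕ) {F : Type*} [Group F] [TopologicalSpace F] (X : Set F) : Prop :=
  ∀ (H : Type) (_ : Group H) (_ : TopologicalSpace H) (_ : IsTopologicalGroup H)
    (_ : CompactSpace H) (_ : TotallyDisconnectedSpace H), IsProPGroup p H →
    ∀ f : X → H, (∀ U ∈ nhds (1 : H), {x : X | f x ∉ U}.Finite) →
      ∃! φ : F →* H, Continuous φ ∧ ∀ x : X, φ (x : F) = f x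

namespace IsFreeProPBasis

variable {p : ℕ} [Fact p.Prime] {F : Type*} [Group F] [TopologicalSpace F] {X : Set F}

theorem exists_lift (hX : IsFreeProPBasis p X) {H : Type} [Group H] [TopologicalSpace H]
    [DiscreteTopology H] [Finite H] (hH : IsPGroup p H) (f : X → H)
    (hf : (Function.mulSupport f).Finite) : ∃ φ : F →* H, ∀ x : X, φ x = f x := by
  obtain ⟨φ, ⟨-, hφ⟩, -⟩ := hX H inferInstance inferInstance inferInstance inferInstance
    inferInstance hH.isProPGroup f fun U hU =>
      hf.subset fun x hx h1 => hx (h1 ▸ mem_of_mem_nhds hU)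
  exact ⟨φ, hφ⟩

theorem not_commute (hX : IsFreeProPBasis p X) {x y : F} (hx : x ∈ X) (hy : y ∈ X)
    (hxy : x ≠ y) : ¬ Commute x y := by
  classical
  let f : X → Heisenberg (ZMod p) :=
    Pi.mulSingle ⟨x, hx⟩ ⟨1, 0, 0⟩ * Pi.mulSingle ⟨y, hy⟩ ⟨0, 1, 0⟩
  have hf : (Function.mulSupport f).Finite :=
    ((Set.finite_singleton _).union (Set.finite_singleton _)).subset
      ((Function.mulSupport_mul _ _).trans
        (Set.union_subset_union Pi.mulSupport_mulSingle_subset Pi.mulSupport_mulSingle_subset))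
  have hH : IsPGroup p (Heisenberg (ZMod p)) :=
    IsPGroup.of_card (by rw [Heisenberg.card, Nat.card_zmod])
  obtain ⟨φ, hφ⟩ := hX.exists_lift hH f hf
  have hne : (⟨x, hx⟩ : X) ≠ ⟨y, hy⟩ := fun h => hxy (congrArg Subtype.val h)
  have hφx : φ x = ⟨1, 0, 0⟩ := by simpa [f, hne] using hφ ⟨x, hx⟩
  have hφy : φ y = ⟨0, 1, 0⟩ := by simpa [f, hne.symm] using hφ ⟨y, hy⟩
  exact fun hc => Heisenberg.not_commute (hφx ▸ hφy ▸ hc.map φ)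

theorem pow_ne_one (hX : IsFreeProPBasis p X) {x : F} (hx : x ∈ X) (k : ℕ) : x ^ p ^ k ≠ 1 := by
  classical
  let f : X → Multiplicative (ZMod (p ^ (k + 1))) := Pi.mulSingle ⟨x, hx⟩ (.ofAdd 1)
  have hH : IsPGroup p (Multiplicative (ZMod (p ^ (k + 1)))) :=
    IsPGroup.of_card (n := k + 1) (by simp)
  obtain ⟨φ, hφ⟩ :=
    hX.exists_lift hH f ((Set.finite_singleton _).subset Pi.mulSupport_mulSingle_subset)
  have hφx : φ x = .ofAdd 1 := by simpa [f] using hφ ⟨x, hx⟩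
  intro h
  have h0 : ((p ^ k : ℕ) : ZMod (p ^ (k + 1))) = 0 := by
    simpa [hφx, ← ofAdd_nsmul] using congrArg φ h
  rw [ZMod.natCast_eq_zero_iff, Nat.pow_dvd_pow_iff_le_right (Fact.out : p.Prime).one_lt] at h0
  omega

end IsFreeProPBasis

theorem IsFreeProP.exists_topological_generator {p : ℕ} [Fact p.Prime] {F : Type*} [Group F]
    [TopologicalSpace F] [IsTopologicalGroup F] [T1Space F] [Nontrivial F]
    (hF : IsFreeProP p F) (hcomm : ∀ x y : F, Commute x y) :
    ∃ x : F, (zpowers x).topologicalClosure = ⊤ ∧ ∀ k, x ^ p ^ k ≠ 1 := by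
  obtain ⟨X, hXgen, hX : IsFreeProPBasis p X⟩ := hF
  obtain ⟨x, hx⟩ : X.Nonempty := by
    refine Set.nonempty_iff_ne_empty.2 fun hXe => ?_
    obtain ⟨y, hy⟩ := exists_ne (1 : F)
    have hy' : y ∈ ((⊥ : Subgroup F).topologicalClosure : Set F) := by
      rw [← Subgroup.closure_empty, ← hXe, hXgen]
      exact mem_top y
    rw [coe_topologicalClosure_bot, _root_.closure_singleton] at hy'
    exact hy hy'
  have hXx : X ⊆ {x} := fun y hy => by_contra fun hyx => hX.not_commute hy hx hyx (hcomm y x)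
  refine ⟨x, eq_top_iff.2 (hXgen ▸ topologicalClosure_mono ((Subgroup.closure_le _).2 ?_)),
    hX.pow_ne_one hx⟩
  exact hXx.trans (Set.singleton_subset_iff.2 (mem_zpowers x))

theorem Subgroup.mem_topologicalClosure_iff_mem_map_subtype {G : Type*} [Group G]
    [TopologicalSpace G] [IsTopologicalGroup G] {U : Subgroup G} {K : Subgroup U} {u : U} :
    u ∈ K.topologicalClosure ↔ (u : G) ∈ (K.map U.subtype).topologicalClosure := by
  rw [← SetLike.mem_coe, ← SetLike.mem_coe, topologicalClosure_coe, topologicalClosure_coe,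
    closure_subtype, coe_map, coe_subtype]

theorem Subgroup.le_topologicalClosure_zpowers_coe {G : Type*} [Group G] [TopologicalSpace G]
    [IsTopologicalGroup G] {U : Subgroup G} {x : U} (hx : (zpowers x).topologicalClosure = ⊤) :
    U ≤ (zpowers (x : G)).topologicalClosure := fun u hu => by
  have hu' : (⟨u, hu⟩ : U) ∈ (zpowers x).topologicalClosure := hx ▸ mem_top _
  rwa [mem_topologicalClosure_iff_mem_map_subtype, MonoidHom.map_zpowers] at hu'

theorem Commute.topologicalClosure_closure_pair {G : Type*} [Group G] [TopologicalSpace G]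
    [IsTopologicalGroup G] [T2Space G] {a b : G} (hab : Commute a b)
    (x y : (Subgroup.closure {a, b}).topologicalClosure) : Commute x y := by
  have hK : IsMulCommutative (Subgroup.closure {a, b}) := isMulCommutative_closure (by
    simp only [Set.mem_insert_iff, Set.mem_singleton_iff]
    rintro x (rfl | rfl) y (rfl | rfl)
    exacts [rfl, hab.eq, hab.eq.symm, rfl])
  let := (Subgroup.closure {a, b}).commGroupTopologicalClosure hK.is_comm.comm
  exact mul_comm x y

section GenNum

variable {G : Type*} [Group G] [TopologicalSpace G] [IsTopologicalGroup G]

theorem genNum_le_card {S : Finset G}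
    (hS : (Subgroup.closure (S : Set G)).topologicalClosure = ⊤) : genNum G ≤ S.card :=
  iInf_le_of_le ⟨S, hS⟩ le_rfl

theorem genNum_topologicalClosure_closure_le (s : Finset G) :
    genNum (Subgroup.closure (s : Set G)).topologicalClosure ≤ s.card := by
  classical
  set U := (Subgroup.closure (s : Set G)).topologicalClosure
  have hsU : ∀ x ∈ s, x ∈ U := fun x hx => le_topologicalClosure _ (subset_closure hx)
  let S : Finset U := s.attach.image fun x => ⟨x.1, hsU x.1 x.2⟩
  have hS : Subtype.val '' (S : Set U) = s := by ext; simpa [S] using hsU _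
  have hcard : S.card ≤ s.card := Finset.card_image_le.trans Finset.card_attach.le
  refine (genNum_le_card (S := S) ?_).trans (by exact_mod_cast hcard)
  refine eq_top_iff.2 fun u _ => mem_topologicalClosure_iff_mem_map_subtype.2 ?_
  rw [MonoidHom.map_closure, coe_subtype, hS]
  exact u.2

theorem index_eq_zero_of_genNum_le_two (hd : 2 < genNum G)
    (hindex : ∀ U : Subgroup G, IsOpen (U : Set G) →
      genNum ↥U = (genNum G - 2) * (U.index : ℕ∞) + 2)
    {U : Subgroup G} (hU : IsClosed (U : Set G)) (hU2 : genNum U ≤ 2) : U.index = 0 := by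
  by_contra h
  have : U.FiniteIndex := ⟨h⟩
  rw [hindex U (U.isOpen_of_isClosed_of_finiteIndex hU)] at hU2
  have h0 : (genNum G - 2) * (U.index : ℕ∞) = 0 :=
    nonpos_iff_eq_zero.1 ((ENat.add_le_add_iff_right (by simp)).1 (hU2.trans_eq (zero_add 2).symm))
  simp [(tsub_pos_of_lt hd).ne', h] at h0

end GenNum

/-- Let `G` be a pro-`p` Demushkin group with `d(G) > 2`, i.e. a
pro-`p` group in which every closed subgroup of infinite index is free pro-`p` and
every open subgroup `U` satisfies `d(U) = (d(G) - 2)[G : U] + 2`.  Then the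
intersection of any two nontrivial closed normal subgroups of `G` is nontrivial. -/
theorem stmt_10 (p : ℕ) (hp : p.Prime)
    {G : Type*} [Group G] [TopologicalSpace G] [IsTopologicalGroup G]
    [CompactSpace G] [TotallyDisconnectedSpace G] (hG : IsProPGroup p G)
    (hd : 2 < genNum G)
    (hfree : ∀ H : Subgroup G, IsClosed (H : Set G) → H.index = 0 → IsFreeProP p ↥H)
    (hindex : ∀ U : Subgroup G, IsOpen (U : Set G) →
      genNum ↥U = (genNum G - 2) * (U.index : ℕ∞) + 2)
    (A B : Subgroup G) (hAn : A.Normal) (hBn : B.Normal)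
    (hAc : IsClosed (A : Set G)) (hBc : IsClosed (B : Set G))
    (hA : A ≠ ⊥) (hB : B ≠ ⊥) :
    A ⊓ B ≠ ⊥ := by
  have := Fact.mk hp
  intro hAB
  obtain ⟨a, haA, ha⟩ := A.bot_or_exists_ne_one.resolve_left hA
  obtain ⟨b, hbB, hb⟩ := B.bot_or_exists_ne_one.resolve_left hB
  have hab : Commute a b :=
    commute_of_normal_of_disjoint A B hAn hBn (disjoint_iff.2 hAB) a b haA hbB
  set U := (Subgroup.closure {a, b}).topologicalClosure
  have haU : a ∈ U := le_topologicalClosure _ (subset_closure (by simp))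
  have hbU : b ∈ U := le_topologicalClosure _ (subset_closure (by simp))
  have hU2 : genNum U ≤ 2 := by
    classical
    have h := genNum_topologicalClosure_closure_le ({a, b} : Finset G)
    rw [Finset.coe_pair] at h
    exact h.trans (by exact_mod_cast Finset.card_le_two)
  have : Nontrivial U := ⟨⟨⟨a, haU⟩, 1, fun h => ha (congrArg Subtype.val h)⟩⟩
  obtain ⟨x, hxU, hx⟩ := (hfree U (isClosed_topologicalClosure _)
    (index_eq_zero_of_genNum_le_two hd hindex (isClosed_topologicalClosure _) hU2)
    ).exists_topological_generator hab.topologicalClosure_closure_pair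
  have hUx := le_topologicalClosure_zpowers_coe hxU
  obtain ⟨m, hm⟩ := hG.exists_pow_mem_of_mem_closure_zpowers hAc haA ha (hUx haU)
  obtain ⟨n, hn⟩ := hG.exists_pow_mem_of_mem_closure_zpowers hBc hbB hb (hUx hbU)
  have hxAB : (x : G) ^ p ^ (m + n) ∈ A ⊓ B :=
    ⟨by rw [pow_add, pow_mul]; exact pow_mem hm _,
      by rw [pow_add, mul_comm, pow_mul]; exact pow_mem hn _⟩
  rw [hAB, mem_bot] at hxAB
  exact hx (m + n) (Subtype.ext hxAB)
end

section
/- Let p be a prime, G a pro-p Demushkin group with d(G) ≥ 3 (so the index formula d(U) = (d(G)-2)[G:U] + 2 holds for open subgroups U), and let A be a finitely generated closed subgroup and B an open subgroup of G. Then d(A ∩ B) ≤ (d(A) - 1)(d(B) - 2) + 1. -/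
open scoped Pointwise

/-!
Let `N` be the normal core of `B`: an open normal subgroup, hence of `p`-power index. Let `D` be
the subgroup generated by a minimal topological generating set `S` of `A`. Since `G ⧸ N` is a
finite `p`-group, `B` is reached from `G` by a chain of subgroups, each normal of index `p` in the
previous one. For such a step `E ⊴ E'`, with `E'` generated by `S'` and `g ∈ S'` outside `E`, the
powers `1, g, …, g ^ (p - 1)` form a transversal of `E` in `E'`; writing `E g ^ i s = E g ^ (i + e s)`,
the Schreier generators are `g ^ p` and the `g ^ i s g ^ (-(i + e s))` with `i < p`, `s ∈ S' \ {g}`,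
at most `p (|S'| - 1) + 1` of them. This gives Schreier's bound `d(D ∩ B) ≤ [G : B] (|S| - 1) + 1`.
As `B` is open, `D ∩ B` is dense in `A ∩ B`, and the index formula gives `[G : B] ≤ d(B) - 2`.
-/
namespace Subgroup

variable {G : Type*} [Group G]

section CyclicTransversal

variable (g : G) (e : G → ℕ)

/-- The Schreier generator for the coset representative `g ^ i` and the generator `s`, where
`e s` is chosen so that `H g ^ i s = H g ^ (i + e s)`. -/
def schreierWord (i : ℕ) (s : G) : G := g ^ i * s * (g ^ (i + e s))⁻¹

theorem schreierWord_self (he : e g = 1) (i : ℕ) : schreierWord g e i g = 1 := by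
  rw [schreierWord, he, pow_succ, mul_inv_cancel]

theorem schreierWord_mul_add (p j i : ℕ) (s : G) :
    schreierWord g e (p * j + i) s = (g ^ p) ^ j * schreierWord g e i s * ((g ^ p) ^ j)⁻¹ := by
  simp only [schreierWord, ← pow_mul, add_assoc, pow_add, mul_inv_rev]
  group

/-- Schreier generators of a subgroup for the transversal `1, g, …, g ^ (p - 1)`; the generator
`g` itself only contributes `g ^ p`. -/
def cyclicSchreierSet [DecidableEq G] (p : ℕ) (S : Finset G) : Finset G :=
  insert (g ^ p) ((Finset.range p ×ˢ S.erase g).image fun q => schreierWord g e q.1 q.2)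

variable {g}

theorem card_cyclicSchreierSet_le [DecidableEq G] {p : ℕ} {S : Finset G} (hgS : g ∈ S) :
    (cyclicSchreierSet g e p S).card ≤ p * (S.card - 1) + 1 :=
  calc (cyclicSchreierSet g e p S).card
      ≤ ((Finset.range p ×ˢ S.erase g).image fun q => schreierWord g e q.1 q.2).card + 1 :=
        Finset.card_insert_le _ _
    _ ≤ (Finset.range p ×ˢ S.erase g).card + 1 := by gcongr; exact Finset.card_image_le
    _ = p * (S.card - 1) + 1 := by
        rw [Finset.card_product, Finset.card_range, Finset.card_erase_of_mem hgS]

theorem schreierWord_mem_closure_cyclicSchreierSet [DecidableEq G] {p : ℕ} (hp : 0 < p)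
    {S : Finset G} (he_self : e g = 1) {s : G} (hs : s ∈ S) (k : ℕ) :
    schreierWord g e k s ∈ closure (cyclicSchreierSet g e p S : Set G) := by
  have hgp : g ^ p ∈ closure (cyclicSchreierSet g e p S : Set G) :=
    subset_closure (Finset.mem_insert_self _ _)
  rcases eq_or_ne s g with rfl | hsg
  · rw [schreierWord_self s e he_self]
    exact one_mem _
  rw [← Nat.div_add_mod k p, schreierWord_mul_add]
  refine mul_mem (mul_mem (pow_mem hgp _) (subset_closure ?_)) (inv_mem (pow_mem hgp _))
  refine Finset.mem_insert_of_mem (Finset.mem_image_of_mem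
    (fun q : ℕ × G => schreierWord g e q.1 q.2) (a := (k % p, s)) ?_)
  simp only [Finset.mem_product, Finset.mem_range, Finset.mem_erase]
  exact ⟨Nat.mod_lt k hp, hsg, hs⟩

theorem exists_mem_closure_cyclicSchreierSet_mul_pow [DecidableEq G] {p : ℕ} (hp : 0 < p)
    {S : Finset G} (he_self : e g = 1) {x : G} (hx : x ∈ closure (S : Set G)) :
    ∃ m ∈ closure (cyclicSchreierSet g e p S : Set G), ∃ k : ℕ, x = m * g ^ k := by
  set M := closure (cyclicSchreierSet g e p S : Set G)
  have hgp : g ^ p ∈ M := subset_closure (Finset.mem_insert_self _ _)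
  induction hx using closure_induction_right with
  | one => exact ⟨1, one_mem M, 0, by simp⟩
  | mul_right x _ s hs ih =>
    obtain ⟨m, hm, k, rfl⟩ := ih
    refine ⟨m * schreierWord g e k s,
      mul_mem hm (schreierWord_mem_closure_cyclicSchreierSet e hp he_self hs k), k + e s, ?_⟩
    simp only [schreierWord]
    group
  | mul_inv_cancel x _ s hs ih =>
    obtain ⟨m, hm, k, rfl⟩ := ih
    set k' := k + p * e s - e s
    have hk' : k' + e s = k + p * e s :=
      Nat.sub_add_cancel (le_add_left (Nat.le_mul_of_pos_left _ hp))
    -- `g ^ k * s⁻¹ = ((g ^ p) ^ e s)⁻¹ * (schreierWord g e k' s)⁻¹ * g ^ k'`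
    refine ⟨m * ((g ^ p) ^ e s)⁻¹ * (schreierWord g e k' s)⁻¹,
      mul_mem (mul_mem hm (inv_mem (pow_mem hgp _)))
        (inv_mem (schreierWord_mem_closure_cyclicSchreierSet e hp he_self hs k')), k', ?_⟩
    simp only [schreierWord, hk', ← pow_mul, pow_add]
    group

theorem closure_cyclicSchreierSet [DecidableEq G] {H : Subgroup G} {p : ℕ} (hp : 0 < p)
    {S : Finset G} (hgS : g ∈ S) (hpow : ∀ k, g ^ k ∈ H ↔ p ∣ k) (he_self : e g = 1)
    (he : ∀ s ∈ S, ∀ i, schreierWord g e i s ∈ H) :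
    closure (cyclicSchreierSet g e p S : Set G) = closure S ⊓ H := by
  have hg : g ∈ closure (S : Set G) := subset_closure hgS
  have hle : closure (cyclicSchreierSet g e p S : Set G) ≤ closure S ⊓ H := by
    rw [closure_le]
    intro t ht
    simp only [cyclicSchreierSet, Finset.coe_insert, Finset.coe_image, Set.mem_insert_iff,
      Set.mem_image, Finset.mem_coe, Finset.mem_product, Finset.mem_erase] at ht
    rcases ht with rfl | ⟨⟨i, s⟩, ⟨-, -, hs⟩, rfl⟩
    · exact mem_inf.mpr ⟨pow_mem hg p, (hpow p).mpr dvd_rfl⟩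
    · exact mem_inf.mpr ⟨mul_mem (mul_mem (pow_mem hg i) (subset_closure hs))
        (inv_mem (pow_mem hg _)), he s hs i⟩
  refine le_antisymm hle fun x ⟨hxS, hxH⟩ => ?_
  obtain ⟨m, hm, k, rfl⟩ := exists_mem_closure_cyclicSchreierSet_mul_pow e hp he_self hxS
  obtain ⟨j, rfl⟩ := (hpow k).mp ((H.mul_mem_cancel_left (hle hm).2).mp hxH)
  rw [pow_mul]
  exact mul_mem hm (pow_mem (subset_closure (Finset.mem_insert_self _ _)) j)

end CyclicTransversal

theorem pow_mem_iff_dvd_and_exists_pow_mul_mul_inv_mem {p : ℕ} (hp : p.Prime) {B B' : Subgroup G}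
    [(B.subgroupOf B').Normal] (hidx : B.relIndex B' = p) {g : G} (hg : g ∈ B') (hgB : g ∉ B) :
    (∀ k : ℕ, g ^ k ∈ B ↔ p ∣ k) ∧
      ∀ s ∈ B', ∃ n : ℕ, ∀ i : ℕ, g ^ i * s * (g ^ (i + n))⁻¹ ∈ B := by
  set π := QuotientGroup.mk' (B.subgroupOf B')
  have hmem : ∀ x : B', (x : G) ∈ B ↔ π x = 1 := fun x => by
    rw [QuotientGroup.mk'_apply, QuotientGroup.eq_one_iff, mem_subgroupOf]
  have hcard : Nat.card (B' ⧸ B.subgroupOf B') = p := by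
    rw [← index_eq_card]; exact hidx
  have : Finite (B' ⧸ B.subgroupOf B') := Nat.finite_of_card_ne_zero (hcard ▸ hp.ne_zero)
  set c := π ⟨g, hg⟩
  have horder : orderOf c = p := by
    rcases hp.eq_one_or_self_of_dvd _ (hcard ▸ _root_.orderOf_dvd_natCard c) with h | h
    · exact absurd ((hmem ⟨g, hg⟩).mpr (orderOf_eq_one_iff.mp h)) hgB
    · exact h
  refine ⟨fun k => ?_, fun s hs => ?_⟩
  · rw [← horder, orderOf_dvd_iff_pow_eq_one, ← map_pow]
    exact hmem (⟨g, hg⟩ ^ k)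
  obtain ⟨n, hn⟩ : ∃ n : ℕ, c ^ n = π ⟨s, hs⟩ := by
    have htop : zpowers c = ⊤ := eq_top_of_card_eq _ (by rw [Nat.card_zpowers, horder, hcard])
    exact mem_powers_iff_mem_zpowers.mpr (htop ▸ mem_top _)
  refine ⟨n, fun i => (hmem (⟨g, hg⟩ ^ i * ⟨s, hs⟩ * (⟨g, hg⟩ ^ (i + n))⁻¹)).mpr ?_⟩
  rw [map_mul, map_mul, map_inv, map_pow, map_pow, ← hn]
  change c ^ i * c ^ n * (c ^ (i + n))⁻¹ = 1
  rw [pow_add]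
  group

theorem exists_finset_card_le_closure_eq_inf_of_relIndex_eq_prime {p : ℕ} (hp : p.Prime)
    {B B' : Subgroup G} [(B.subgroupOf B').Normal] (hidx : B.relIndex B' = p) {S : Finset G}
    (hS : (S : Set G) ⊆ B') :
    ∃ T : Finset G, T.card ≤ p * (S.card - 1) + 1 ∧ closure (T : Set G) = closure S ⊓ B := by
  classical
  by_cases hSB : (S : Set G) ⊆ B
  · refine ⟨S, ?_, (inf_eq_left.mpr ((closure_le B).mpr hSB)).symm⟩
    calc S.card ≤ 1 * (S.card - 1) + 1 := by omega
      _ ≤ p * (S.card - 1) + 1 := by gcongr; exact hp.one_lt.le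
  obtain ⟨g, hgS, hgB⟩ := Set.not_subset.mp hSB
  obtain ⟨hpow, hexp⟩ := pow_mem_iff_dvd_and_exists_pow_mul_mul_inv_mem hp hidx (hS hgS) hgB
  choose! e he using fun s (hs : s ∈ S) => hexp s (hS hs)
  set e' := Function.update e g 1
  have he'_self : e' g = 1 := Function.update_self _ _ _
  refine ⟨cyclicSchreierSet g e' p S, card_cyclicSchreierSet_le e' hgS,
    closure_cyclicSchreierSet e' hp.pos hgS hpow he'_self fun s hs i => ?_⟩
  rcases eq_or_ne s g with rfl | hsg
  · rw [schreierWord_self s e' he'_self]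
    exact one_mem B
  · rw [schreierWord, show e' s = e s from Function.update_of_ne hsg _ _]
    exact he s hs i

theorem _root_.IsPGroup.exists_le_relIndex_eq_of_ne_top {Q : Type*} [Group Q] [Finite Q]
    {p : ℕ} [Fact p.Prime] (hQ : IsPGroup p Q) {C : Subgroup Q} (hC : C ≠ ⊤) :
    ∃ K : Subgroup Q, C ≤ K ∧ (C.subgroupOf K).Normal ∧ C.relIndex K = p := by
  have hp : p.Prime := Fact.out
  obtain ⟨n, hn⟩ := IsPGroup.iff_card.mp (hQ.to_subgroup C)
  obtain ⟨m, hm⟩ := IsPGroup.iff_card.mp hQ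
  have hnm : n < m := by
    have hle : n ≤ m := (Nat.pow_dvd_pow_iff_le_right hp.one_lt).mp
      (hn ▸ hm ▸ card_subgroup_dvd_card C)
    refine lt_of_le_of_ne hle fun h => hC ?_
    rw [← card_eq_iff_eq_top, hn, hm, h]
  obtain ⟨K, hK, hCK⟩ := Sylow.exists_subgroup_card_pow_succ (hm ▸ pow_dvd_pow p hnm) hn
  have hrel : C.relIndex K = p := by
    have h := card_mul_index (C.subgroupOf K)
    rw [Nat.card_congr (subgroupOfEquivOfLe hCK).toEquiv, hn, hK, pow_succ] at h
    exact Nat.eq_of_mul_eq_mul_left (pow_pos hp.pos n) h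
  refine ⟨K, hCK, normal_of_index_eq_minFac_card ?_, hrel⟩
  rw [hK, hp.pow_minFac n.succ_ne_zero]
  exact hrel

theorem Normal.subgroupOf_comap {H : Type*} [Group H] {C K : Subgroup H}
    (hC : (C.subgroupOf K).Normal) (f : G →* H) :
    ((C.comap f).subgroupOf (K.comap f)).Normal :=
  hC.comap (f.subgroupComap K)

theorem exists_le_relIndex_eq_of_index_eq_pow {p m : ℕ} [Fact p.Prime] {N B : Subgroup G}
    [N.Normal] (hN : N.index = p ^ m) (hNB : N ≤ B) (hB : B ≠ ⊤) :
    ∃ B' : Subgroup G, B ≤ B' ∧ (B.subgroupOf B').Normal ∧ B.relIndex B' = p := by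
  set π := QuotientGroup.mk' N
  have hp : p.Prime := Fact.out
  have : Finite (G ⧸ N) :=
    Nat.finite_of_card_ne_zero (by rw [← index_eq_card, hN]; exact pow_ne_zero m hp.ne_zero)
  have hQ : IsPGroup p (G ⧸ N) := IsPGroup.of_card (by rw [← index_eq_card, hN])
  have hBπ : (B.map π).comap π = B := by
    rw [comap_map_eq, QuotientGroup.ker_mk', sup_eq_left.mpr hNB]
  obtain ⟨K, hBK, hnormal, hrel⟩ :=
    hQ.exists_le_relIndex_eq_of_ne_top (C := B.map π) fun h => hB (by rw [← hBπ, h, comap_top])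
  refine ⟨K.comap π, hBπ ▸ comap_mono hBK, hBπ ▸ hnormal.subgroupOf_comap π, ?_⟩
  rw [← hBπ, relIndex_comap, map_comap_eq_self_of_surjective (QuotientGroup.mk'_surjective N),
    hrel]

theorem exists_finset_card_le_closure_eq_inf {p m : ℕ} (hp : p.Prime) {N : Subgroup G}
    [N.Normal] (hN : N.index = p ^ m) (S : Finset G) {B : Subgroup G} (hNB : N ≤ B) :
    ∃ T : Finset G, T.card ≤ B.index * (S.card - 1) + 1 ∧ closure (T : Set G) = closure S ⊓ B := by
  have := Fact.mk hp
  induction hn : B.index using Nat.strong_induction_on generalizing B with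
  | _ n ih =>
    rcases eq_or_ne B ⊤ with rfl | hB
    · rw [index_top] at hn
      exact ⟨S, by rw [← hn]; omega, by rw [inf_top_eq]⟩
    obtain ⟨B', hBB', _, hrel⟩ := exists_le_relIndex_eq_of_index_eq_pow hN hNB hB
    have hindex : p * B'.index = n := by rw [← hrel, relIndex_mul_index hBB', hn]
    have hB'0 : B'.index ≠ 0 := fun h =>
      pow_ne_zero m hp.ne_zero (hN ▸ Nat.eq_zero_of_zero_dvd (h ▸ index_dvd_of_le (hNB.trans hBB')))
    obtain ⟨T', hT'card, hT'⟩ := ih B'.index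
      (hindex ▸ lt_mul_left (Nat.pos_of_ne_zero hB'0) hp.one_lt) (hNB.trans hBB') rfl
    obtain ⟨T, hTcard, hT⟩ := exists_finset_card_le_closure_eq_inf_of_relIndex_eq_prime hp hrel
      (subset_closure.trans (hT' ▸ inf_le_right : (closure (T' : Set G) : Set G) ⊆ B'))
    refine ⟨T, ?_, by rw [hT, hT', inf_assoc, inf_eq_right.mpr hBB']⟩
    calc T.card ≤ p * (T'.card - 1) + 1 := hTcard
      _ ≤ p * (B'.index * (S.card - 1)) + 1 := by gcongr; omega
      _ = n * (S.card - 1) + 1 := by rw [← hindex, mul_assoc]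

end Subgroup

section Topological

variable {G : Type*} [Group G] [TopologicalSpace G] [IsTopologicalGroup G]

theorem Subgroup.topologicalClosure_closure_eq_top_iff (K : Subgroup G) (S : Set K) :
    (Subgroup.closure S).topologicalClosure = ⊤ ↔
      (K : Set G) ⊆ _root_.closure (closure (Subtype.val '' S) : Set G) := by
  have himage : (closure (Subtype.val '' S) : Set G) = Subtype.val '' (closure S : Set K) := by
    rw [← K.coe_subtype, ← MonoidHom.map_closure, Subgroup.coe_map]
  rw [himage, eq_top_iff]
  exact ⟨fun h x hx => closure_subtype.mp (h (Subgroup.mem_top ⟨x, hx⟩)),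
    fun h x _ => closure_subtype.mpr (h x.2)⟩

theorem genNum_le_card_s14 {K : Subgroup G} {T : Finset G} (hTK : (T : Set G) ⊆ K)
    (hK : (K : Set G) ⊆ closure (Subgroup.closure (T : Set G) : Set G)) :
    genNum K ≤ T.card := by
  classical
  let T' : Finset K := T.subtype (· ∈ K)
  have hval : Subtype.val '' (T' : Set K) = T := by
    ext x
    simp only [T', Set.mem_image, Finset.mem_coe, Finset.mem_subtype]
    exact ⟨fun ⟨y, hy, hyx⟩ => hyx ▸ hy, fun hx => ⟨⟨x, hTK hx⟩, hx, rfl⟩⟩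
  calc genNum K ≤ T'.card :=
        iInf_le_of_le ⟨T', (K.topologicalClosure_closure_eq_top_iff _).mpr (hval ▸ hK)⟩ le_rfl
    _ ≤ T.card := by
        exact_mod_cast (Finset.card_subtype _ _).trans_le (Finset.card_filter_le _ _)

theorem exists_finset_card_eq_genNum {K : Subgroup G} (hK : TopFG K) :
    ∃ S : Finset G, (S : Set G) ⊆ K ∧ (S.card : ℕ∞) = genNum K ∧
      (K : Set G) ⊆ closure (Subgroup.closure (S : Set G) : Set G) := by
  obtain ⟨S₀, hfin, hdense⟩ := hK
  have : Nonempty {S : Finset K // (Subgroup.closure (S : Set K)).topologicalClosure = ⊤} :=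
    ⟨⟨hfin.toFinset, by rwa [hfin.coe_toFinset]⟩⟩
  obtain ⟨⟨S, hS⟩, hSmin⟩ := ciInf_mem fun S : {S : Finset K //
    (Subgroup.closure (S : Set K)).topologicalClosure = ⊤} => (S.1.card : ℕ∞)
  refine ⟨S.map (Function.Embedding.subtype _), ?_, by rw [Finset.card_map]; exact hSmin, ?_⟩
  · rw [Finset.coe_map]
    exact Set.image_subset_iff.mpr fun x _ => x.2
  · rw [Finset.coe_map]
    exact (K.topologicalClosure_closure_eq_top_iff _).mp hS

theorem Subgroup.isOpen_normalCore [CompactSpace G] {B : Subgroup G} (hB : IsOpen (B : Set G)) :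
    IsOpen (B.normalCore : Set G) :=
  have := Subgroup.quotient_finite_of_isOpen B hB
  have := Subgroup.finiteIndex_of_finite_quotient (H := B)
  B.normalCore.isOpen_of_isClosed_of_finiteIndex (B.normalCore_isClosed (B.isClosed_of_isOpen hB))

theorem index_le_genNum_sub_two {U : Subgroup G} (hd : 3 ≤ genNum G)
    (hU : genNum U = (genNum G - 2) * U.index + 2) : (U.index : ℕ∞) ≤ genNum U - 2 :=
  have hd' : 1 ≤ genNum G - 2 :=
    ENat.le_sub_of_add_le_left (by simp) (by rwa [two_add_one_eq_three])
  ENat.le_sub_of_add_le_right (by simp) (hU ▸ by gcongr; exact le_mul_of_one_le_left' hd')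

end Topological

theorem stmt_14_general (p : ℕ) (hp : p.Prime)
    {G : Type*} [Group G] [TopologicalSpace G] [IsTopologicalGroup G]
    [CompactSpace G] (hG : IsProPGroup p G)
    (hd : 3 ≤ genNum G)
    (hindex : ∀ U : Subgroup G, IsOpen (U : Set G) →
      genNum ↥U = (genNum G - 2) * (U.index : ℕ∞) + 2)
    (A B : Subgroup G) (hAfg : TopFG A)
    (hBo : IsOpen (B : Set G)) :
    genNum ↥(A ⊓ B) ≤ (genNum ↥A - 1) * (genNum ↥B - 2) + 1 := by
  obtain ⟨m, hm⟩ := hG B.normalCore B.normalCore_normal (Subgroup.isOpen_normalCore hBo)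
  obtain ⟨S, hSA, hScard, hAS⟩ := exists_finset_card_eq_genNum hAfg
  obtain ⟨T, hTcard, hT⟩ := Subgroup.exists_finset_card_le_closure_eq_inf hp hm S B.normalCore_le
  have hTAB : (T : Set G) ⊆ A ⊓ B :=
    Subgroup.subset_closure.trans (hT ▸ inf_le_inf_right B ((Subgroup.closure_le A).mpr hSA))
  have hABT : ((A ⊓ B : Subgroup G) : Set G) ⊆ closure (Subgroup.closure (T : Set G) : Set G) :=
    fun x ⟨hxA, hxB⟩ => by
      rw [hT, Subgroup.coe_inf, Set.inter_comm]
      exact hBo.inter_closure ⟨hxB, hAS hxA⟩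
  calc genNum ↥(A ⊓ B) ≤ T.card := genNum_le_card_s14 hTAB hABT
    _ ≤ ((B.index * (S.card - 1) + 1 : ℕ) : ℕ∞) := by exact_mod_cast hTcard
    _ ≤ (genNum ↥B - 2) * (genNum ↥A - 1) + 1 := by
        rw [← hScard]
        push_cast [ENat.natCast_sub]
        gcongr
        exact index_le_genNum_sub_two hd (hindex B hBo)
    _ = (genNum ↥A - 1) * (genNum ↥B - 2) + 1 := by rw [mul_comm]

/-- Let `G` be a pro-`p` Demushkin group with `d(G) ≥ 3` (so that the
index formula `d(U) = (d(G) - 2)[G : U] + 2` holds for open subgroups `U`).  If `A`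
is a finitely generated closed subgroup and `B` an open subgroup of `G`, then
`d(A ∩ B) ≤ (d(A) - 1)(d(B) - 2) + 1`. -/
theorem stmt_14 (p : ℕ) (hp : p.Prime)
    {G : Type*} [Group G] [TopologicalSpace G] [IsTopologicalGroup G]
    [CompactSpace G] [TotallyDisconnectedSpace G] (hG : IsProPGroup p G)
    (hd : 3 ≤ genNum G)
    (hindex : ∀ U : Subgroup G, IsOpen (U : Set G) →
      genNum ↥U = (genNum G - 2) * (U.index : ℕ∞) + 2)
    (A B : Subgroup G) (hAc : IsClosed (A : Set G)) (hAfg : TopFG A)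
    (hBo : IsOpen (B : Set G)) :
    genNum ↥(A ⊓ B) ≤ (genNum ↥A - 1) * (genNum ↥B - 2) + 1 :=
  stmt_14_general p hp hG hd hindex A B hAfg hBo
end
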